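/- arXiv:2311.14892 — 8 statements merged into one kernel-verified Lean document; each statement's English description precedes it below -/
import Mathlib

section
/- Let (A_n), (B_n) and (Y_n) be sequences of real-valued random variables (for each n defined on a common probability space) such that A_n → 0 in probability and B_n → 0 in probability. Suppose that for every sequence of positive reals δ_n → 0 one has P(|Y_n| ≤ δ_n) → 0 as n → ∞. Then |A_n/(Y_n + B_n)| → 0 in probability (with the convention that the ratio is 0 where Y_n + B_n = 0). -/
open MeasureTheory Filter

lemma diag_aux {g : ℕ → ℕ → ℝ} (hg : ∀ k, Tendsto (g k) atTop (nhds 0))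
    (h0 : ∀ k n, 0 ≤ g k n) :
    ∃ φ : ℕ → ℕ, Tendsto φ atTop atTop ∧
      Tendsto (fun n => g (φ n) n) atTop (nhds 0) := by
  have hN : ∀ k : ℕ, ∃ N : ℕ, ∀ n ≥ N, g k n < 1 / (k + 1) := by
    intro k
    have : ∀ᶠ n in atTop, g k n < 1 / (k + 1) :=
      (hg k).eventually (gt_mem_nhds (by positivity))
    exact eventually_atTop.mp this
  choose N hNspec using hN
  set M : ℕ → ℕ := fun k => Nat.rec (N 0) (fun k ih => max (N (k + 1)) (ih + 1)) k with hM
  have hMmono : StrictMono M := strictMono_nat_of_lt_succ fun k => by simp [hM]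
  have hMN : ∀ k, N k ≤ M k := by
    intro k; cases k with
    | zero => simp [hM]
    | succ k => simp [hM]
  set φ : ℕ → ℕ := fun n => Nat.findGreatest (fun k => M k ≤ n) n with hφ
  have hMle : ∀ k, k ≤ M k := fun k => (hMmono.le_apply)
  have hφ_top : Tendsto φ atTop atTop := by
    rw [tendsto_atTop_atTop]
    intro K
    refine ⟨M K, fun n hn => ?_⟩
    exact Nat.le_findGreatest ((hMle K).trans hn) hn
  refine ⟨φ, hφ_top, ?_⟩
  have hbound : ∀ n ≥ M 0, g (φ n) n ≤ 1 / (φ n + 1) := by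
    intro n hn
    have hP : M (φ n) ≤ n :=
      Nat.findGreatest_spec (P := fun k => M k ≤ n) (m := 0) (Nat.zero_le n) hn
    exact le_of_lt (hNspec (φ n) n ((hMN _).trans hP))
  have hinv : Tendsto (fun n => 1 / ((φ n : ℝ) + 1)) atTop (nhds 0) := by
    have h1 : Tendsto (fun n => ((φ n : ℝ) + 1)) atTop atTop :=
      tendsto_atTop_add_const_right _ 1 (tendsto_natCast_atTop_atTop.comp hφ_top)
    simpa [one_div, Pi.inv_def] using h1.inv_tendsto_atTop
  refine squeeze_zero' (Eventually.of_forall fun n => h0 _ n) ?_ hinv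
  filter_upwards [eventually_ge_atTop (M 0)] with n hn
  simpa using hbound n hn


/-- If `A n → 0` and `B n → 0` in probability and `Y n` satisfies
`P(|Y n| ≤ δ n) → 0` for every positive sequence `δ n → 0`, then
`|A n / (Y n + B n)| → 0` in probability (with the convention `x / 0 = 0`, which is Lean's
division convention). -/
theorem stmt5 {Ω : ℕ → Type*} [∀ n, MeasurableSpace (Ω n)]
    (P : ∀ n, Measure (Ω n)) [∀ n, IsProbabilityMeasure (P n)]
    (A B Y : ∀ n, Ω n → ℝ)
    (hA : ∀ ε : ℝ, 0 < ε →
      Tendsto (fun n => ((P n) {ω | ε ≤ |A n ω|}).toReal) atTop (nhds 0))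
    (hB : ∀ ε : ℝ, 0 < ε →
      Tendsto (fun n => ((P n) {ω | ε ≤ |B n ω|}).toReal) atTop (nhds 0))
    (hY : ∀ δ : ℕ → ℝ, (∀ n, 0 < δ n) → Tendsto δ atTop (nhds 0) →
      Tendsto (fun n => ((P n) {ω | |Y n ω| ≤ δ n}).toReal) atTop (nhds 0)) :
    ∀ ε : ℝ, 0 < ε →
      Tendsto (fun n => ((P n) {ω | ε ≤ |A n ω / (Y n ω + B n ω)|}).toReal)
        atTop (nhds 0) := by
  intro ε hε
  -- diagonal sequence for A and B
  set g : ℕ → ℕ → ℝ := fun k n =>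
    ((P n) {ω | 1 / (k + 1 : ℝ) ≤ |A n ω|}).toReal
      + ((P n) {ω | 1 / (k + 1 : ℝ) ≤ |B n ω|}).toReal with hg_def
  have hg : ∀ k, Tendsto (g k) atTop (nhds 0) := by
    intro k
    have hk : (0 : ℝ) < 1 / (k + 1) := by positivity
    simpa [hg_def, one_div] using (hA _ hk).add (hB _ hk)
  have h0 : ∀ k n, 0 ≤ g k n := fun k n =>
    add_nonneg ENNReal.toReal_nonneg ENNReal.toReal_nonneg
  obtain ⟨φ, hφ_top, hφ0⟩ := diag_aux hg h0
  set η : ℕ → ℝ := fun n => 1 / ((φ n : ℝ) + 1) with hη_def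
  have hηpos : ∀ n, 0 < η n := fun n => by positivity
  have hη0 : Tendsto η atTop (nhds 0) := by
    have h1 : Tendsto (fun n => ((φ n : ℝ) + 1)) atTop atTop :=
      tendsto_atTop_add_const_right _ 1 (tendsto_natCast_atTop_atTop.comp hφ_top)
    simpa [hη_def, one_div, Pi.inv_def] using h1.inv_tendsto_atTop
  set δ : ℕ → ℝ := fun n => η n / ε + η n with hδ_def
  have hδpos : ∀ n, 0 < δ n := fun n => by
    have := hηpos n; positivity
  have hδ0 : Tendsto δ atTop (nhds 0) := by
    simpa using (hη0.div_const ε).add hη0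
  have hYδ := hY δ hδpos hδ0
  -- set inclusion
  have hsub : ∀ n, {ω | ε ≤ |A n ω / (Y n ω + B n ω)|} ⊆
      {ω | η n ≤ |A n ω|} ∪ {ω | η n ≤ |B n ω|} ∪ {ω | |Y n ω| ≤ δ n} := by
    intro n ω hω
    simp only [Set.mem_setOf_eq] at hω
    by_contra hc
    simp only [Set.mem_union, Set.mem_setOf_eq, not_or, not_le] at hc
    obtain ⟨⟨hA1, hB1⟩, hY1⟩ := hc
    have hne : Y n ω + B n ω ≠ 0 := by
      intro h
      rw [h, div_zero, abs_zero] at hω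
      exact absurd hω (not_le.mpr hε)
    have habs : 0 < |Y n ω + B n ω| := abs_pos.mpr hne
    have h1 : ε * |Y n ω + B n ω| ≤ |A n ω| := by
      rw [abs_div] at hω
      exact (le_div_iff₀ habs).mp hω
    have h2 : |Y n ω + B n ω| < η n / ε := by
      rw [lt_div_iff₀ hε, mul_comm]
      exact lt_of_le_of_lt h1 hA1
    have h3 : |Y n ω| ≤ |Y n ω + B n ω| + |B n ω| := by
      calc |Y n ω| = |(Y n ω + B n ω) - B n ω| := by ring_nf
        _ ≤ |Y n ω + B n ω| + |B n ω| := abs_sub _ _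
    have : |Y n ω| < δ n := by
      rw [hδ_def]
      exact lt_of_le_of_lt h3 (add_lt_add h2 hB1)
    exact absurd this.le (not_le.mpr hY1)
  -- measure bound
  have hbound : ∀ n, ((P n) {ω | ε ≤ |A n ω / (Y n ω + B n ω)|}).toReal ≤
      g (φ n) n + ((P n) {ω | |Y n ω| ≤ δ n}).toReal := by
    intro n
    have hm : (P n) {ω | ε ≤ |A n ω / (Y n ω + B n ω)|} ≤
        (P n) {ω | η n ≤ |A n ω|} + (P n) {ω | η n ≤ |B n ω|}
          + (P n) {ω | |Y n ω| ≤ δ n} := by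
      refine (measure_mono (hsub n)).trans ?_
      refine (measure_union_le _ _).trans ?_
      exact add_le_add_left (measure_union_le _ _) _
    have := ENNReal.toReal_mono (by finiteness) hm
    rw [ENNReal.toReal_add (by finiteness) (by finiteness),
      ENNReal.toReal_add (by finiteness) (by finiteness)] at this
    simpa [hg_def, hη_def] using this
  refine squeeze_zero' (Eventually.of_forall fun n => ENNReal.toReal_nonneg)
    (Eventually.of_forall hbound) ?_
  simpa using hφ0.add hYδ
end

section
/- Let (X_n), (Y_n) and (Z_n) be sequences of real-valued random variables such that: (i) for each n, X_n and Y_n are defined on a common probability space and |X_n − Y_n| → 0 in probability; (ii) the law of each Z_n is absolutely continuous with respect to Lebesgue measure with density f_n satisfying sup_n sup_{x∈ℝ} f_n(x) ≤ B for some finite constant B; and (iii) sup_{a ∈ ℝ} |P(Y_n ≤ a) − P(Z_n ≤ a)| → 0 as n → ∞. Then sup_{a ∈ ℝ} |P(X_n ≤ a) − P(Z_n ≤ a)| → 0 as n → ∞. -/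
open MeasureTheory Filter

lemma stmt6_aux_toReal_le {α : Type*} [MeasurableSpace α] (μ : Measure α) [IsFiniteMeasure μ]
    {A B C : Set α} (h : A ⊆ B ∪ C) :
    (μ A).toReal ≤ (μ B).toReal + (μ C).toReal := by
  have h1 : μ A ≤ μ B + μ C := le_trans (measure_mono h) (measure_union_le _ _)
  have h2 := ENNReal.toReal_mono
    (ENNReal.add_ne_top.mpr ⟨measure_ne_top _ _, measure_ne_top _ _⟩) h1
  rwa [ENNReal.toReal_add (measure_ne_top _ _) (measure_ne_top _ _)] at h2

lemma stmt6_aux_dens {Ω' : Type*} [MeasurableSpace Ω'] (Q : Measure Ω') [IsProbabilityMeasure Q]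
    (Z : Ω' → ℝ) (hZm : Measurable Z) (f : ℝ → ℝ) (B : ℝ)
    (hdens : Measure.map Z Q = MeasureTheory.volume.withDensity (fun x => ENNReal.ofReal (f x)))
    (hfB : ∀ x, f x ≤ B) {c d : ℝ} (hcd : c ≤ d) :
    (Q {ω | Z ω ≤ d}).toReal ≤ (Q {ω | Z ω ≤ c}).toReal + max B 0 * (d - c) := by
  have hsub : {ω | Z ω ≤ d} ⊆ {ω | Z ω ≤ c} ∪ Z ⁻¹' Set.Ioc c d := by
    intro ω hω
    by_cases h : Z ω ≤ c
    · exact Or.inl h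
    · exact Or.inr ⟨lt_of_not_ge h, hω⟩
  have h1 := stmt6_aux_toReal_le Q hsub
  have h2 : Q (Z ⁻¹' Set.Ioc c d) ≤ ENNReal.ofReal (max B 0) * ENNReal.ofReal (d - c) := by
    rw [← Measure.map_apply hZm measurableSet_Ioc, hdens,
        withDensity_apply _ measurableSet_Ioc]
    calc ∫⁻ x in Set.Ioc c d, ENNReal.ofReal (f x) ∂volume
        ≤ ∫⁻ _ in Set.Ioc c d, ENNReal.ofReal (max B 0) ∂volume := by
          refine setLIntegral_mono measurable_const (fun x _ => ?_)
          exact ENNReal.ofReal_le_ofReal (le_max_of_le_left (hfB x))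
      _ = ENNReal.ofReal (max B 0) * ENNReal.ofReal (d - c) := by
          rw [setLIntegral_const, Real.volume_Ioc]
  have h3 : (Q (Z ⁻¹' Set.Ioc c d)).toReal ≤ max B 0 * (d - c) := by
    have := ENNReal.toReal_mono
      (ENNReal.mul_ne_top ENNReal.ofReal_ne_top ENNReal.ofReal_ne_top) h2
    rwa [ENNReal.toReal_mul, ENNReal.toReal_ofReal (le_max_right B 0),
      ENNReal.toReal_ofReal (by linarith)] at this
  linarith

lemma stmt6_aux_le_one {α : Type*} [MeasurableSpace α] (μ : Measure α) [IsProbabilityMeasure μ]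
    (s : Set α) : (μ s).toReal ≤ 1 := by
  have := ENNReal.toReal_mono ENNReal.one_ne_top (prob_le_one (μ := μ) (s := s))
  simpa using this

/-- Suppose `|X n − Y n| → 0` in probability, each `Z n` has a law absolutely
continuous w.r.t. Lebesgue measure with density `f n` uniformly bounded by `B`, and the
Kolmogorov distance between `Y n` and `Z n` tends to zero. Then the Kolmogorov distance
between `X n` and `Z n` tends to zero. -/
theorem stmt6 {Ω Ω' : ℕ → Type*} [∀ n, MeasurableSpace (Ω n)] [∀ n, MeasurableSpace (Ω' n)]
    (P : ∀ n, Measure (Ω n)) [∀ n, IsProbabilityMeasure (P n)]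
    (Q : ∀ n, Measure (Ω' n)) [∀ n, IsProbabilityMeasure (Q n)]
    (X Y : ∀ n, Ω n → ℝ) (Z : ∀ n, Ω' n → ℝ)
    (hXm : ∀ n, Measurable (X n)) (hYm : ∀ n, Measurable (Y n))
    (hZm : ∀ n, Measurable (Z n))
    (hXY : ∀ ε : ℝ, 0 < ε →
      Tendsto (fun n => ((P n) {ω | ε ≤ |X n ω - Y n ω|}).toReal) atTop (nhds 0))
    (f : ℕ → ℝ → ℝ) (B : ℝ)
    (hdens : ∀ n, Measure.map (Z n) (Q n)
      = MeasureTheory.volume.withDensity (fun x => ENNReal.ofReal (f n x)))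
    (hfB : ∀ n x, f n x ≤ B)
    (hYZ : Tendsto (fun n => ⨆ a : ℝ,
        |((P n) {ω | Y n ω ≤ a}).toReal - ((Q n) {ω | Z n ω ≤ a}).toReal|)
      atTop (nhds 0)) :
    Tendsto (fun n => ⨆ a : ℝ,
        |((P n) {ω | X n ω ≤ a}).toReal - ((Q n) {ω | Z n ω ≤ a}).toReal|)
      atTop (nhds 0) := by
  set M : ℝ := max B 0 with hM
  have hM0 : 0 ≤ M := le_max_right _ _
  have hbdd : ∀ n, BddAbove (Set.range fun a : ℝ =>
      |((P n) {ω | Y n ω ≤ a}).toReal - ((Q n) {ω | Z n ω ≤ a}).toReal|) := by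
    intro n
    refine ⟨2, ?_⟩
    rintro _ ⟨a, rfl⟩
    have h1 := stmt6_aux_le_one (P n) {ω | Y n ω ≤ a}
    have h2 := stmt6_aux_le_one (Q n) {ω | Z n ω ≤ a}
    have h3 : (0:ℝ) ≤ ((P n) {ω | Y n ω ≤ a}).toReal := ENNReal.toReal_nonneg
    have h4 : (0:ℝ) ≤ ((Q n) {ω | Z n ω ≤ a}).toReal := ENNReal.toReal_nonneg
    rw [abs_le]; constructor <;> linarith
  set dY : ℕ → ℝ := fun n => ⨆ a : ℝ,
    |((P n) {ω | Y n ω ≤ a}).toReal - ((Q n) {ω | Z n ω ≤ a}).toReal| with hdY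
  have hdY_le : ∀ n a, |((P n) {ω | Y n ω ≤ a}).toReal - ((Q n) {ω | Z n ω ≤ a}).toReal|
      ≤ dY n := fun n a => le_ciSup (hbdd n) a
  have key : ∀ (ε : ℝ), 0 < ε → ∀ n a,
      |((P n) {ω | X n ω ≤ a}).toReal - ((Q n) {ω | Z n ω ≤ a}).toReal|
        ≤ ((P n) {ω | ε ≤ |X n ω - Y n ω|}).toReal + dY n + M * ε := by
    intro ε hε n a
    set p : ℝ := ((P n) {ω | ε ≤ |X n ω - Y n ω|}).toReal with hp
    have hup1 : ((P n) {ω | X n ω ≤ a}).toReal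
        ≤ ((P n) {ω | Y n ω ≤ a + ε}).toReal + p := by
      refine stmt6_aux_toReal_le (P n) ?_
      intro ω hω
      by_cases h : Y n ω ≤ a + ε
      · exact Or.inl h
      · refine Or.inr ?_
        have h1 : ε ≤ Y n ω - X n ω := by
          simp only [Set.mem_setOf_eq] at hω ⊢; linarith [lt_of_not_ge h]
        have h2 : Y n ω - X n ω ≤ |X n ω - Y n ω| := by
          rw [abs_sub_comm]; exact le_abs_self _
        exact le_trans h1 h2
    have hup2 : ((P n) {ω | Y n ω ≤ a + ε}).toReal
        ≤ ((Q n) {ω | Z n ω ≤ a + ε}).toReal + dY n := by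
      have := hdY_le n (a + ε)
      rw [abs_le] at this; linarith [this.2]
    have hup3 : ((Q n) {ω | Z n ω ≤ a + ε}).toReal
        ≤ ((Q n) {ω | Z n ω ≤ a}).toReal + M * ε := by
      have := stmt6_aux_dens (Q n) (Z n) (hZm n) (f n) B (hdens n) (hfB n)
        (c := a) (d := a + ε) (by linarith)
      simpa using this
    have hlo1 : ((P n) {ω | Y n ω ≤ a - ε}).toReal
        ≤ ((P n) {ω | X n ω ≤ a}).toReal + p := by
      refine stmt6_aux_toReal_le (P n) ?_
      intro ω hω
      by_cases h : X n ω ≤ a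
      · exact Or.inl h
      · refine Or.inr ?_
        have h1 : ε ≤ X n ω - Y n ω := by
          simp only [Set.mem_setOf_eq] at hω ⊢; linarith [lt_of_not_ge h]
        exact le_trans h1 (le_abs_self _)
    have hlo2 : ((Q n) {ω | Z n ω ≤ a - ε}).toReal
        ≤ ((P n) {ω | Y n ω ≤ a - ε}).toReal + dY n := by
      have := hdY_le n (a - ε)
      rw [abs_le] at this; linarith [this.1]
    have hlo3 : ((Q n) {ω | Z n ω ≤ a}).toReal
        ≤ ((Q n) {ω | Z n ω ≤ a - ε}).toReal + M * ε := by
      have := stmt6_aux_dens (Q n) (Z n) (hZm n) (f n) B (hdens n) (hfB n)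
        (c := a - ε) (d := a) (by linarith)
      simpa using this
    rw [abs_le]; constructor <;> linarith
  rw [NormedAddCommGroup.tendsto_nhds_zero]
  intro ε₀ hε₀
  set ε : ℝ := ε₀ / (3 * (M + 1)) with hεdef
  have hε : 0 < ε := by positivity
  have hMε : M * ε ≤ ε₀ / 3 := by
    rw [hεdef]
    have h1 : M / (M + 1) ≤ 1 := by
      rw [div_le_one (by linarith)]; linarith
    calc M * (ε₀ / (3 * (M + 1))) = ε₀ / 3 * (M / (M + 1)) := by
          field_simp
      _ ≤ ε₀ / 3 * 1 := mul_le_mul_of_nonneg_left h1 (by positivity)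
      _ = ε₀ / 3 := by ring
  have h1 := (hXY ε hε).eventually (eventually_lt_nhds (by positivity : (0:ℝ) < ε₀ / 3))
  have h2 := hYZ.eventually (eventually_lt_nhds (by positivity : (0:ℝ) < ε₀ / 3))
  filter_upwards [h1, h2] with n hn1 hn2
  have hdYnn : (0:ℝ) ≤ dY n := le_trans (abs_nonneg _) (hdY_le n 0)
  have hsup : (⨆ a : ℝ, |((P n) {ω | X n ω ≤ a}).toReal
      - ((Q n) {ω | Z n ω ≤ a}).toReal|)
      ≤ ((P n) {ω | ε ≤ |X n ω - Y n ω|}).toReal + dY n + M * ε := by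
    refine Real.iSup_le (fun a => key ε hε n a) ?_
    positivity
  have hnn : (0:ℝ) ≤ ⨆ a : ℝ, |((P n) {ω | X n ω ≤ a}).toReal
      - ((Q n) {ω | Z n ω ≤ a}).toReal| :=
    Real.iSup_nonneg (fun a => abs_nonneg _)
  rw [Real.norm_eq_abs, abs_of_nonneg hnn]
  have : ((P n) {ω | ε ≤ |X n ω - Y n ω|}).toReal + dY n + M * ε < ε₀ := by
    have := hn2
    simp only [hdY] at *
    linarith
  linarith
end

section
/- Let α > 0, K > 0 and p ≥ 1. Suppose X_1, …, X_n are real-valued random variables on a common probability space satisfying the tail bound P(|X_i| ≥ t) ≤ 2·exp(−t^α/K) for all t ≥ 0 and all i. Then there exists a constant C depending only on p, K and α (and not on n) such that E[max_{1 ≤ i ≤ n} |X_i|^p/(1 + log i)^{p/α}] ≤ C; consequently E[max_{1 ≤ i ≤ n} |X_i|^p] ≤ C·(1 + log n)^{p/α}. -/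
open MeasureTheory

private lemma sum_inv_sq_le (n : ℕ) :
    ∑ i ∈ Finset.range n, (1:ℝ)/((i:ℝ)+1)^2 ≤ 2 := by
  have h : ∑ i ∈ Finset.range n, (1:ℝ)/((i:ℝ)+1)^2 ≤ 2 - 2/((n:ℝ)+1) := by
    induction n with
    | zero => norm_num
    | succ k ih =>
      rw [Finset.sum_range_succ]
      push_cast
      have hk : (0:ℝ) < (k:ℝ)+1 := by positivity
      have hk2 : (0:ℝ) < (k:ℝ)+1+1 := by positivity
      have key : 1/((k:ℝ)+1)^2 ≤ 2/((k:ℝ)+1) - 2/((k:ℝ)+1+1) := by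
        rw [div_sub_div _ _ (ne_of_gt hk) (ne_of_gt hk2),
          div_le_div_iff₀ (by positivity) (by positivity)]
        nlinarith [sq_nonneg ((k:ℝ)+1)]
      linarith
  have h2 : (0:ℝ) ≤ 2/((n:ℝ)+1) := by positivity
  linarith

/-- For `α > 0`, `K > 0`, `p ≥ 1` there is a constant `C` (depending only on
`p`, `K`, `α`, not on `n` or the random variables) such that whenever `X 1, …, X n` satisfy
the tail bound `P(|X i| ≥ t) ≤ 2 exp(−t^α/K)` for all `t ≥ 0`, we have
`E[max_i |X i|^p / (1 + log i)^(p/α)] ≤ C` and consequently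
`E[max_i |X i|^p] ≤ C (1 + log n)^(p/α)`.  Expectations of the nonnegative integrands are
expressed as lower Lebesgue integrals. -/
theorem stmt8 (α K p : ℝ) (hα : 0 < α) (hK : 0 < K) (hp : 1 ≤ p) :
    ∃ C : ℝ, 0 < C ∧
      ∀ (n : ℕ) (Ω : Type) [MeasurableSpace Ω] (P : Measure Ω) [IsProbabilityMeasure P]
        (X : Fin n → Ω → ℝ), (∀ i, Measurable (X i)) →
        (∀ i, ∀ t : ℝ, 0 ≤ t →
          P {ω | t ≤ |X i ω|} ≤ ENNReal.ofReal (2 * Real.exp (-(t ^ α) / K))) →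
        (∫⁻ ω, ENNReal.ofReal (⨆ i : Fin n,
            |X i ω| ^ p / (1 + Real.log ((i : ℕ) + 1)) ^ (p / α)) ∂P
          ≤ ENNReal.ofReal C) ∧
        (∫⁻ ω, ENNReal.ofReal (⨆ i : Fin n, |X i ω| ^ p) ∂P
          ≤ ENNReal.ofReal (C * (1 + Real.log n) ^ (p / α))) := by
  have hp0 : (0:ℝ) < p := lt_of_lt_of_le one_pos hp
  set β : ℝ := α / p with hβdef
  have hβ : 0 < β := div_pos hα hp0
  have hpα : p / α = β⁻¹ := by rw [hβdef, inv_div]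
  have hpβ : p⁻¹ * α = β := by rw [hβdef, div_eq_mul_inv]; ring
  -- choose m with m β ≥ 2
  obtain ⟨m, hm2⟩ : ∃ m : ℕ, (2:ℝ) ≤ (m:ℝ) * β := by
    refine ⟨⌈2/β⌉₊, ?_⟩
    have h1 : 2/β ≤ (⌈2/β⌉₊:ℝ) := Nat.le_ceil _
    calc (2:ℝ) = (2/β) * β := by field_simp
    _ ≤ (⌈2/β⌉₊:ℝ) * β := mul_le_mul_of_nonneg_right h1 hβ.le
  set s₀ : ℝ := (2*K) ^ β⁻¹ with hs₀def
  have hs₀ : 0 < s₀ := Real.rpow_pos_of_pos (by linarith) _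
  set s₁ : ℝ := max 1 s₀ with hs₁def
  have hs₁1 : (1:ℝ) ≤ s₁ := le_max_left _ _
  have hs₁0 : (0:ℝ) < s₁ := lt_of_lt_of_le one_pos hs₁1
  set D : ℝ := 4 * (m.factorial : ℝ) * K ^ m with hDdef
  have hD : 0 < D := by positivity
  refine ⟨s₁ + D, by linarith, ?_⟩
  intro n Ω _ P _ X hX htail
  -- trivial case n = 0
  rcases Nat.eq_zero_or_pos n with hn0 | hn
  · subst hn0
    simp only [Real.iSup_of_isEmpty, ENNReal.ofReal_zero, lintegral_zero]
    exact ⟨zero_le, zero_le⟩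
  haveI : Nonempty (Fin n) := Fin.pos_iff_nonempty.mp hn
  -- notation
  set M : Ω → ℝ := fun ω => ⨆ i : Fin n,
      |X i ω| ^ p / (1 + Real.log ((i : ℕ) + 1)) ^ (p / α) with hMdef
  have hL1 : ∀ i : Fin n, (1:ℝ) ≤ 1 + Real.log (((i:ℕ):ℝ) + 1) := by
    intro i
    have hc : (0:ℝ) ≤ ((i:ℕ):ℝ) := Nat.cast_nonneg _
    have : (0:ℝ) ≤ Real.log (((i:ℕ):ℝ) + 1) := Real.log_nonneg (by linarith)
    linarith
  have hLpos : ∀ i : Fin n, (0:ℝ) < (1 + Real.log (((i:ℕ):ℝ) + 1)) ^ (p/α) :=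
    fun i => Real.rpow_pos_of_pos (lt_of_lt_of_le one_pos (hL1 i)) _
  have hM0 : ∀ ω, 0 ≤ M ω := by
    intro ω
    apply Real.iSup_nonneg
    intro i
    exact div_nonneg (Real.rpow_nonneg (abs_nonneg _) _) (hLpos i).le
  have hMmble : Measurable M := by
    apply Measurable.iSup
    intro i
    exact ((Real.continuous_rpow_const hp0.le).measurable.comp (hX i).abs).div_const _
  -- the key tail bound
  have hkey : ∀ s : ℝ, s ∈ Set.Ioi s₁ → P {a | s < M a} ≤ ENNReal.ofReal (D * s ^ (-2 : ℝ)) := by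
    intro s hs
    rw [Set.mem_Ioi] at hs
    have hs1 : (1:ℝ) ≤ s := le_trans hs₁1 hs.le
    have hs0 : (0:ℝ) < s := lt_of_lt_of_le one_pos hs1
    have hss₀ : s₀ ≤ s := le_trans (le_max_right 1 s₀) hs.le
    set u : ℝ := s ^ β / K with hu
    have hu2 : (2:ℝ) ≤ u := by
      rw [hu, le_div_iff₀ hK]
      calc 2 * K = s₀ ^ β := by
            rw [hs₀def, Real.rpow_inv_rpow (by linarith) hβ.ne']
      _ ≤ s ^ β := Real.rpow_le_rpow hs₀.le hss₀ hβ.le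
    have hu0 : (0:ℝ) < u := lt_of_lt_of_le two_pos hu2
    have hsub : {a | s < M a} ⊆ ⋃ i : Fin n,
        {ω | (s * (1 + Real.log (((i:ℕ):ℝ) + 1)) ^ (p/α)) ^ p⁻¹ ≤ |X i ω|} := by
      intro a ha
      simp only [Set.mem_setOf_eq] at ha
      by_contra hcon
      simp only [Set.mem_iUnion, Set.mem_setOf_eq, not_exists, not_le] at hcon
      have hMle : M a ≤ s := by
        apply ciSup_le
        intro i
        rw [div_le_iff₀ (hLpos i)]
        have h1 : |X i a| < (s * (1 + Real.log (((i:ℕ):ℝ) + 1)) ^ (p/α)) ^ p⁻¹ := hcon i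
        have h2 : |X i a| ^ p < ((s * (1 + Real.log (((i:ℕ):ℝ) + 1)) ^ (p/α)) ^ p⁻¹) ^ p :=
          Real.rpow_lt_rpow (abs_nonneg _) h1 hp0
        rw [Real.rpow_inv_rpow (mul_nonneg hs0.le (hLpos i).le) hp0.ne'] at h2
        exact h2.le
      exact absurd ha (not_lt.mpr hMle)
    -- bound on exp(-u)
    have hexp : Real.exp (-u) ≤ (m.factorial : ℝ) * K ^ m * s ^ (-2:ℝ) := by
      have h1 : u ^ m / (m.factorial : ℝ) ≤ Real.exp u :=
        Real.pow_div_factorial_le_exp (x := u) hu0.le m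
      have hfac : (0:ℝ) < (m.factorial : ℝ) := by positivity
      have h2 : Real.exp (-u) ≤ (m.factorial : ℝ) / u ^ m := by
        rw [Real.exp_neg, inv_le_iff_one_le_mul₀ (Real.exp_pos u)]
        calc (1:ℝ) = (m.factorial : ℝ) / u ^ m * (u ^ m / (m.factorial : ℝ)) := by
              field_simp
        _ ≤ (m.factorial : ℝ) / u ^ m * Real.exp u :=
            mul_le_mul_of_nonneg_left h1 (by positivity)
      have h3 : (m.factorial : ℝ) / u ^ m = (m.factorial : ℝ) * K ^ m / s ^ ((m:ℝ) * β) := by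
        rw [hu, div_pow, ← Real.rpow_natCast (s ^ β) m, ← Real.rpow_mul hs0.le,
          mul_comm β (m:ℝ)]
        rw [div_div_eq_mul_div]
      have h4 : s ^ (2:ℝ) ≤ s ^ ((m:ℝ) * β) :=
        Real.rpow_le_rpow_of_exponent_le hs1 hm2
      have h5 : (m.factorial : ℝ) * K ^ m / s ^ ((m:ℝ) * β)
          ≤ (m.factorial : ℝ) * K ^ m / s ^ (2:ℝ) := by
        gcongr
      have h6 : (m.factorial : ℝ) * K ^ m / s ^ (2:ℝ)
          = (m.factorial : ℝ) * K ^ m * s ^ (-2:ℝ) := by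
        rw [Real.rpow_neg hs0.le, div_eq_mul_inv]
      rw [h3] at h2
      linarith
    -- per-index term bound
    have hterm : ∀ i : Fin n,
        2 * Real.exp (-(((s * (1 + Real.log (((i:ℕ):ℝ) + 1)) ^ (p/α)) ^ p⁻¹) ^ α) / K)
          ≤ (2 * ((m.factorial : ℝ) * K ^ m * s ^ (-2:ℝ))) * (1/(((i:ℕ):ℝ)+1)^2) := by
      intro i
      have hc : (0:ℝ) ≤ ((i:ℕ):ℝ) := Nat.cast_nonneg _
      have hy1 : (1:ℝ) ≤ ((i:ℕ):ℝ) + 1 := by linarith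
      have hy0 : (0:ℝ) < ((i:ℕ):ℝ) + 1 := by linarith
      have hLi0 : (0:ℝ) ≤ 1 + Real.log (((i:ℕ):ℝ) + 1) := by linarith [hL1 i]
      have hbase : (0:ℝ) ≤ s * (1 + Real.log (((i:ℕ):ℝ) + 1)) ^ (p/α) :=
        mul_nonneg hs0.le (hLpos i).le
      have hexp_eq : ((s * (1 + Real.log (((i:ℕ):ℝ) + 1)) ^ (p/α)) ^ p⁻¹) ^ α
          = s ^ β * (1 + Real.log (((i:ℕ):ℝ) + 1)) := by
        rw [← Real.rpow_mul hbase, hpβ,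
          Real.mul_rpow hs0.le (hLpos i).le, hpα, Real.rpow_inv_rpow hLi0 hβ.ne']
      have e1 : -(s ^ β * (1 + Real.log (((i:ℕ):ℝ) + 1)))/K
          = -u + Real.log (((i:ℕ):ℝ) + 1) * (-u) := by
        rw [hu]
        field_simp
        ring
      have e2 : Real.exp (-(((s * (1 + Real.log (((i:ℕ):ℝ) + 1)) ^ (p/α)) ^ p⁻¹) ^ α) / K)
          = Real.exp (-u) * (((i:ℕ):ℝ) + 1) ^ (-u) := by
        rw [hexp_eq, e1, Real.exp_add, Real.rpow_def_of_pos hy0]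
      have hpow : (((i:ℕ):ℝ) + 1) ^ (-u) ≤ 1/(((i:ℕ):ℝ)+1)^2 := by
        calc (((i:ℕ):ℝ) + 1) ^ (-u) ≤ (((i:ℕ):ℝ) + 1) ^ (-2:ℝ) :=
              Real.rpow_le_rpow_of_exponent_le hy1 (by linarith)
        _ = 1/(((i:ℕ):ℝ)+1)^2 := by
              rw [Real.rpow_neg hy0.le, Real.rpow_two, one_div]
      rw [e2, ← mul_assoc]
      have hA0 : (0:ℝ) ≤ (m.factorial : ℝ) * K ^ m * s ^ (-2:ℝ) := by positivity
      apply mul_le_mul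
      · exact mul_le_mul_of_nonneg_left hexp (by norm_num)
      · exact hpow
      · exact Real.rpow_nonneg hy0.le _
      · linarith
    -- assemble
    calc P {a | s < M a}
        ≤ ∑ i : Fin n,
            P {ω | (s * (1 + Real.log (((i:ℕ):ℝ) + 1)) ^ (p/α)) ^ p⁻¹ ≤ |X i ω|} :=
          le_trans (measure_mono hsub) (measure_iUnion_fintype_le _ _)
      _ ≤ ∑ i : Fin n, ENNReal.ofReal
            (2 * Real.exp (-(((s * (1 + Real.log (((i:ℕ):ℝ) + 1)) ^ (p/α)) ^ p⁻¹) ^ α) / K)) :=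
          Finset.sum_le_sum fun i _ => htail i _
            (Real.rpow_nonneg (mul_nonneg hs0.le (hLpos i).le) _)
      _ = ENNReal.ofReal (∑ i : Fin n,
            2 * Real.exp (-(((s * (1 + Real.log (((i:ℕ):ℝ) + 1)) ^ (p/α)) ^ p⁻¹) ^ α) / K)) :=
          (ENNReal.ofReal_sum_of_nonneg fun i _ => by positivity).symm
      _ ≤ ENNReal.ofReal (D * s ^ (-2:ℝ)) := by
          apply ENNReal.ofReal_le_ofReal
          have hA0 : (0:ℝ) ≤ 2 * ((m.factorial : ℝ) * K ^ m * s ^ (-2:ℝ)) := by positivity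
          calc ∑ i : Fin n,
                2 * Real.exp (-(((s * (1 + Real.log (((i:ℕ):ℝ) + 1)) ^ (p/α)) ^ p⁻¹) ^ α) / K)
              ≤ ∑ i : Fin n,
                (2 * ((m.factorial : ℝ) * K ^ m * s ^ (-2:ℝ))) * (1/(((i:ℕ):ℝ)+1)^2) :=
                Finset.sum_le_sum fun i _ => hterm i
            _ = (2 * ((m.factorial : ℝ) * K ^ m * s ^ (-2:ℝ)))
                  * ∑ i ∈ Finset.range n, (1:ℝ)/((i:ℝ)+1)^2 := by
                rw [← Finset.mul_sum, Fin.sum_univ_eq_sum_range (fun k => (1:ℝ)/((k:ℝ)+1)^2) n]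
            _ ≤ (2 * ((m.factorial : ℝ) * K ^ m * s ^ (-2:ℝ))) * 2 :=
                mul_le_mul_of_nonneg_left (sum_inv_sq_le n) hA0
            _ = D * s ^ (-2:ℝ) := by rw [hDdef]; ring
  -- the tail integral
  have htail_int : ∫⁻ t in Set.Ioi s₁, ENNReal.ofReal (D * t ^ (-2:ℝ)) ≤ ENNReal.ofReal D := by
    have hint : IntegrableOn (fun t : ℝ => D * t ^ (-2:ℝ)) (Set.Ioi s₁) :=
      (integrableOn_Ioi_rpow_of_lt (by norm_num) hs₁0).const_mul D
    have hnn : 0 ≤ᵐ[volume.restrict (Set.Ioi s₁)] fun t : ℝ => D * t ^ (-2:ℝ) := by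
      filter_upwards [ae_restrict_mem measurableSet_Ioi] with t ht
      exact mul_nonneg hD.le (Real.rpow_nonneg (le_of_lt (lt_trans hs₁0 ht)) _)
    rw [← ofReal_integral_eq_lintegral_ofReal hint hnn]
    apply ENNReal.ofReal_le_ofReal
    rw [MeasureTheory.integral_const_mul, integral_Ioi_rpow_of_lt (by norm_num) hs₁0]
    have he : -s₁ ^ ((-2:ℝ)+1) / ((-2:ℝ)+1) = s₁⁻¹ := by
      norm_num
      rw [Real.rpow_neg_one]
    rw [he]
    have h1 : s₁⁻¹ ≤ 1 := inv_le_one_of_one_le₀ hs₁1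
    calc D * s₁⁻¹ ≤ D * 1 := mul_le_mul_of_nonneg_left h1 hD.le
    _ = D := mul_one D
  -- main estimate
  have hmain : ∫⁻ ω, ENNReal.ofReal (M ω) ∂P ≤ ENNReal.ofReal (s₁ + D) := by
    rw [lintegral_eq_lintegral_meas_lt P (Filter.Eventually.of_forall hM0) hMmble.aemeasurable]
    rw [← Set.Ioc_union_Ioi_eq_Ioi hs₁0.le,
      lintegral_union measurableSet_Ioi (Set.Ioc_disjoint_Ioi le_rfl),
      ENNReal.ofReal_add hs₁0.le hD.le]
    apply add_le_add
    · calc ∫⁻ t in Set.Ioc 0 s₁, P {a | t < M a}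
          ≤ ∫⁻ _ in Set.Ioc 0 s₁, 1 := lintegral_mono fun t => prob_le_one
        _ = volume (Set.Ioc (0:ℝ) s₁) := setLIntegral_one _
        _ = ENNReal.ofReal s₁ := by rw [Real.volume_Ioc, sub_zero]
    · calc ∫⁻ t in Set.Ioi s₁, P {a | t < M a}
          ≤ ∫⁻ t in Set.Ioi s₁, ENNReal.ofReal (D * t ^ (-2:ℝ)) :=
            setLIntegral_mono' measurableSet_Ioi hkey
        _ ≤ ENNReal.ofReal D := htail_int
  constructor
  · exact hmain
  · -- second conclusion
    have hn' : (1:ℝ) ≤ (n:ℝ) := by exact_mod_cast hn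
    have hlogn : 0 ≤ Real.log (n:ℝ) := Real.log_nonneg hn'
    have hLn0 : (0:ℝ) ≤ (1 + Real.log (n:ℝ)) ^ (p/α) :=
      Real.rpow_nonneg (by linarith) _
    have hpw : ∀ ω, (⨆ i : Fin n, |X i ω| ^ p) ≤ (1 + Real.log (n:ℝ)) ^ (p/α) * M ω := by
      intro ω
      apply ciSup_le
      intro i
      have hiY : |X i ω| ^ p / (1 + Real.log (((i:ℕ):ℝ) + 1)) ^ (p/α) ≤ M ω :=
        le_ciSup (f := fun j : Fin n =>
          |X j ω| ^ p / (1 + Real.log (((j:ℕ):ℝ) + 1)) ^ (p/α))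
          (Set.Finite.bddAbove (Set.finite_range _)) i
      have hin : (((i:ℕ):ℝ) + 1) ≤ (n:ℝ) := by exact_mod_cast i.isLt
      have hLiLn : (1 + Real.log (((i:ℕ):ℝ) + 1)) ^ (p/α) ≤ (1 + Real.log (n:ℝ)) ^ (p/α) := by
        apply Real.rpow_le_rpow (by linarith [hL1 i]) _ (by positivity)
        have := Real.log_le_log (by positivity) hin
        linarith
      calc |X i ω| ^ p
          = (|X i ω| ^ p / (1 + Real.log (((i:ℕ):ℝ) + 1)) ^ (p/α))
            * (1 + Real.log (((i:ℕ):ℝ) + 1)) ^ (p/α) :=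
            (div_mul_cancel₀ _ (hLpos i).ne').symm
        _ ≤ M ω * (1 + Real.log (n:ℝ)) ^ (p/α) := by
            apply mul_le_mul hiY hLiLn (hLpos i).le (hM0 ω)
        _ = (1 + Real.log (n:ℝ)) ^ (p/α) * M ω := mul_comm _ _
    calc ∫⁻ ω, ENNReal.ofReal (⨆ i : Fin n, |X i ω| ^ p) ∂P
        ≤ ∫⁻ ω, ENNReal.ofReal ((1 + Real.log (n:ℝ)) ^ (p/α)) * ENNReal.ofReal (M ω) ∂P := by
          apply lintegral_mono
          intro ω
          dsimp only
          rw [← ENNReal.ofReal_mul hLn0]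
          exact ENNReal.ofReal_le_ofReal (hpw ω)
      _ = ENNReal.ofReal ((1 + Real.log (n:ℝ)) ^ (p/α)) * ∫⁻ ω, ENNReal.ofReal (M ω) ∂P :=
          lintegral_const_mul' _ _ ENNReal.ofReal_ne_top
      _ ≤ ENNReal.ofReal ((1 + Real.log (n:ℝ)) ^ (p/α)) * ENNReal.ofReal (s₁ + D) :=
          mul_le_mul_right hmain _
      _ = ENNReal.ofReal ((s₁ + D) * (1 + Real.log (n:ℝ)) ^ (p/α)) := by
          rw [← ENNReal.ofReal_mul hLn0, mul_comm]
end

section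
/- Let X_1, …, X_n be independent real-valued random variables with finite sixth moments, means μ_i = E[X_i], and suppose E[(∑_{i=1}^n X_i)²] ≤ C for some constant C ≥ 0. Suppose further that there is a constant U ≥ 0 such that for every i: E[(X_i − μ_i)³] ≤ U·E[(X_i − μ_i)²] and (E[(X_i − μ_i)⁶])^{1/3} ≤ U·E[(X_i − μ_i)²]. Then E[(∑_{i=1}^n X_i)⁶] ≤ 64·U³·C³ + 32·C³. -/
set_option maxHeartbeats 1000000

open MeasureTheory ProbabilityTheory Finset
open scoped ENNReal

section Helpers

variable {Ω : Type*} [MeasurableSpace Ω] {P : Measure Ω}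



lemma abs_pow_le_one_add (x : ℝ) {k : ℕ} (hk : k ≤ 6) : |x| ^ k ≤ 1 + x ^ 6 := by
  have h6 : (0:ℝ) ≤ x ^ 6 := by positivity
  rcases le_or_gt (|x|) 1 with h | h
  · have h1 : |x| ^ k ≤ 1 ^ k := pow_le_pow_left₀ (abs_nonneg x) h k
    rw [one_pow] at h1
    linarith
  · have h1 : (1:ℝ) ≤ |x| := h.le
    have : |x| ^ k ≤ |x| ^ 6 := pow_le_pow_right₀ h1 hk
    have h2 : |x| ^ 6 = x ^ 6 := by
      rw [← abs_pow, abs_of_nonneg h6]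
    linarith [this, h2 ▸ this]

lemma integrable_pow6 {f : Ω → ℝ} (hf : MemLp f 6 P) :
    Integrable (fun ω => f ω ^ 6) P := by
  have h := hf.integrable_norm_rpow (by norm_num) (by norm_num)
  have he : (fun ω => f ω ^ 6) = fun ω => ‖f ω‖ ^ ((6:ℝ≥0∞).toReal) := by
    funext ω
    have : ((6:ℝ≥0∞)).toReal = (6:ℝ) := by norm_num
    rw [this, Real.norm_eq_abs, show ((6:ℝ)) = ((6:ℕ):ℝ) by norm_num,
      Real.rpow_natCast (|f ω|) 6, ← abs_pow, abs_of_nonneg (by positivity)]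
  rw [he]; exact h

lemma integrable_pow_mul_pow [IsFiniteMeasure P] {f g : Ω → ℝ} (hf : MemLp f 6 P) (hg : MemLp g 6 P)
    {j k : ℕ} (hjk : j + k ≤ 6) :
    Integrable (fun ω => f ω ^ j * g ω ^ k) P := by
  have hb : Integrable (fun ω => (1 + f ω ^ 6) + (1 + g ω ^ 6)) P :=
    ((integrable_const (1:ℝ)).add (integrable_pow6 hf)).add
      ((integrable_const (1:ℝ)).add (integrable_pow6 hg))
  refine Integrable.mono' hb ((hf.1.pow _).mul (hg.1.pow _))
    (Filter.Eventually.of_forall fun ω => ?_)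
  rw [Real.norm_eq_abs, abs_mul, abs_pow, abs_pow]
  have hf6 : (0:ℝ) ≤ f ω ^ 6 := by positivity
  have hg6 : (0:ℝ) ≤ g ω ^ 6 := by positivity
  rcases le_total (|f ω|) (|g ω|) with h | h
  · have h1 : |f ω| ^ j * |g ω| ^ k ≤ |g ω| ^ j * |g ω| ^ k := by
      have := pow_le_pow_left₀ (abs_nonneg (f ω)) h j
      exact mul_le_mul_of_nonneg_right this (by positivity)
    have h2 : |g ω| ^ j * |g ω| ^ k = |g ω| ^ (j + k) := (pow_add _ _ _).symm
    have h3 : |g ω| ^ (j + k) ≤ 1 + g ω ^ 6 := abs_pow_le_one_add _ hjk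
    linarith
  · have h1 : |f ω| ^ j * |g ω| ^ k ≤ |f ω| ^ j * |f ω| ^ k := by
      have := pow_le_pow_left₀ (abs_nonneg (g ω)) h k
      exact mul_le_mul_of_nonneg_left this (by positivity)
    have h2 : |f ω| ^ j * |f ω| ^ k = |f ω| ^ (j + k) := (pow_add _ _ _).symm
    have h3 : |f ω| ^ (j + k) ≤ 1 + f ω ^ 6 := abs_pow_le_one_add _ hjk
    linarith


/-- Cauchy–Schwarz for integrals. -/
lemma sq_integral_mul_le {f g : Ω → ℝ}
    (hf2 : Integrable (fun ω => f ω ^ 2) P) (hg2 : Integrable (fun ω => g ω ^ 2) P)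
    (hfg : Integrable (fun ω => f ω * g ω) P) :
    (∫ ω, f ω * g ω ∂P) ^ 2 ≤ (∫ ω, f ω ^ 2 ∂P) * (∫ ω, g ω ^ 2 ∂P) := by
  set A := ∫ ω, f ω ^ 2 ∂P with hA
  set B := ∫ ω, g ω ^ 2 ∂P with hB
  set I := ∫ ω, f ω * g ω ∂P with hI
  have hA0 : 0 ≤ A := integral_nonneg fun ω => sq_nonneg _
  have hB0 : 0 ≤ B := integral_nonneg fun ω => sq_nonneg _
  rcases eq_or_lt_of_le hA0 with h0 | hpos
  · -- A = 0: f = 0 a.e., so I = 0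
    have hf0 : (fun ω => f ω ^ 2) =ᵐ[P] 0 := by
      rw [← integral_eq_zero_iff_of_nonneg (fun ω => sq_nonneg _) hf2]
      exact h0.symm
    have hfg0 : (fun ω => f ω * g ω) =ᵐ[P] 0 := by
      filter_upwards [hf0] with ω hω
      have : f ω = 0 := by
        have := hω
        simp only [Pi.zero_apply] at this
        exact pow_eq_zero_iff (n := 2) (by norm_num) |>.mp this
      simp [this]
    have hI0 : I = 0 := by
      rw [hI, integral_congr_ae hfg0]; simp
    rw [hI0, ← h0]
    simp
  · have key : 0 ≤ ∫ ω, (I * f ω - A * g ω) ^ 2 ∂P := integral_nonneg fun ω => sq_nonneg _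
    have int1 : Integrable (fun ω => I ^ 2 * f ω ^ 2 + A ^ 2 * g ω ^ 2) P :=
      (hf2.const_mul _).add (hg2.const_mul _)
    have int2 : Integrable (fun ω => (2 * I * A) * (f ω * g ω)) P := hfg.const_mul _
    have expand : ∫ ω, (I * f ω - A * g ω) ^ 2 ∂P
        = (I ^ 2 * A + A ^ 2 * B) - 2 * I * A * I := by
      have hpt : ∀ ω, (I * f ω - A * g ω) ^ 2
          = (I ^ 2 * f ω ^ 2 + A ^ 2 * g ω ^ 2) - (2 * I * A) * (f ω * g ω) := by
        intro ω; ring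
      rw [integral_congr_ae (Filter.Eventually.of_forall hpt), integral_sub int1 int2,
        integral_add (hf2.const_mul _) (hg2.const_mul _),
        integral_const_mul, integral_const_mul, integral_const_mul]
    nlinarith [key, hpos]

lemma abs_le_of_sq_le_sq'' {a b : ℝ} (hb : 0 ≤ b) (h : a ^ 2 ≤ b ^ 2) : |a| ≤ b := by
  nlinarith [abs_nonneg a, sq_abs a]

lemma alg3 {p q x3 y3 : ℝ} (hp : 0 ≤ p) (hq : 0 ≤ q)
    (hx : x3 ^ 2 ≤ p ^ 6) (hy : y3 ^ 2 ≤ q ^ 6) :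
    (x3 + y3) ^ 2 ≤ (p ^ 2 + q ^ 2) ^ 3 := by
  have h1 : |x3| ≤ p ^ 3 := abs_le_of_sq_le_sq'' (by positivity) (by nlinarith)
  have h2 : |y3| ≤ q ^ 3 := abs_le_of_sq_le_sq'' (by positivity) (by nlinarith)
  have h1' := abs_le.mp h1
  have h2' := abs_le.mp h2
  nlinarith [sq_nonneg (p*q*(p-q)), mul_nonneg (mul_nonneg hp hp) hq,
    mul_nonneg hp (mul_nonneg hq hq), sq_nonneg (x3+y3-(p^3+q^3)), sq_nonneg (x3+y3+(p^3+q^3))]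

lemma alg4 {p q x4 y4 V v : ℝ} (hx4 : x4 ≤ 3 * p ^ 4) (hy4 : y4 ≤ q ^ 4)
    (hV : 0 ≤ V) (hv : 0 ≤ v) (hVp : V ≤ p ^ 2) (hvq : v ≤ q ^ 2) (hp : 0 ≤ p) (hq : 0 ≤ q) :
    x4 + 6 * V * v + y4 ≤ 3 * (p ^ 2 + q ^ 2) ^ 2 := by
  have : V * v ≤ p ^ 2 * q ^ 2 := mul_le_mul hVp hvq hv (by positivity)
  nlinarith [sq_nonneg q, sq_nonneg (q*q)]

lemma alg5 {p q x5 x3 y3 y5 V v : ℝ} (hp : 0 ≤ p) (hq : 0 ≤ q)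
    (hx5 : x5 ^ 2 ≤ 100 * p ^ 10) (hx3 : x3 ^ 2 ≤ p ^ 6)
    (hy3 : y3 ^ 2 ≤ q ^ 6) (hy5 : y5 ^ 2 ≤ q ^ 10)
    (hV : 0 ≤ V) (hv : 0 ≤ v) (hVp : V ≤ p ^ 2) (hvq : v ≤ q ^ 2) :
    (x5 + 10 * x3 * v + 10 * V * y3 + y5) ^ 2 ≤ 100 * (p ^ 2 + q ^ 2) ^ 5 := by
  obtain ⟨r, hr0, hr2⟩ : ∃ r : ℝ, 0 ≤ r ∧ r ^ 2 = p ^ 2 + q ^ 2 :=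
    ⟨Real.sqrt (p ^ 2 + q ^ 2), Real.sqrt_nonneg _, Real.sq_sqrt (by positivity)⟩
  have hpr : p ≤ r := by nlinarith [sq_nonneg q]
  have hqr : q ≤ r := by nlinarith [sq_nonneg p]
  have h1 : |x5| ≤ 10 * p ^ 5 := abs_le_of_sq_le_sq'' (by positivity) (by nlinarith)
  have h2 : |x3| ≤ p ^ 3 := abs_le_of_sq_le_sq'' (by positivity) (by nlinarith)
  have h3 : |y3| ≤ q ^ 3 := abs_le_of_sq_le_sq'' (by positivity) (by nlinarith)
  have h4 : |y5| ≤ q ^ 5 := abs_le_of_sq_le_sq'' (by positivity) (by nlinarith)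
  have hb2 : |10 * x3 * v| ≤ 10 * p ^ 3 * q ^ 2 := by
    rw [abs_mul, abs_mul, abs_of_nonneg hv, show |(10:ℝ)| = 10 by norm_num]
    have : |x3| * v ≤ p ^ 3 * q ^ 2 := mul_le_mul h2 hvq hv (by positivity)
    nlinarith
  have hb3 : |10 * V * y3| ≤ 10 * p ^ 2 * q ^ 3 := by
    rw [abs_mul, abs_mul, abs_of_nonneg hV, show |(10:ℝ)| = 10 by norm_num]
    have : V * |y3| ≤ p ^ 2 * q ^ 3 := mul_le_mul hVp h3 (abs_nonneg _) (by positivity)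
    nlinarith
  have habs : |x5 + 10 * x3 * v + 10 * V * y3 + y5|
      ≤ 10 * p ^ 5 + 10 * p ^ 3 * q ^ 2 + 10 * p ^ 2 * q ^ 3 + q ^ 5 := by
    calc |x5 + 10 * x3 * v + 10 * V * y3 + y5|
        ≤ |x5 + 10 * x3 * v + 10 * V * y3| + |y5| := abs_add_le _ _
      _ ≤ (|x5 + 10 * x3 * v| + |10 * V * y3|) + |y5| := by gcongr; exact abs_add_le _ _
      _ ≤ ((|x5| + |10 * x3 * v|) + |10 * V * y3|) + |y5| := by gcongr; exact abs_add_le _ _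
      _ ≤ 10 * p ^ 5 + 10 * p ^ 3 * q ^ 2 + 10 * p ^ 2 * q ^ 3 + q ^ 5 := by
          linarith [h1, hb2, hb3, h4]
  have hpqr : 0 ≤ p ^ 2 * q ^ 2 := by positivity
  have e1 : p ^ 5 ≤ p ^ 4 * r := by nlinarith [pow_nonneg hp 4]
  have e2 : p ^ 3 * q ^ 2 ≤ p ^ 2 * q ^ 2 * r := by nlinarith
  have e3 : p ^ 2 * q ^ 3 ≤ p ^ 2 * q ^ 2 * r := by nlinarith
  have e4 : q ^ 5 ≤ q ^ 4 * r := by nlinarith [pow_nonneg hq 4]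
  have e5 : 10 * p ^ 4 + 20 * (p ^ 2 * q ^ 2) + q ^ 4 ≤ 10 * r ^ 4 := by
    have h44 : r ^ 4 = (p ^ 2 + q ^ 2) ^ 2 := by rw [show r ^ 4 = (r ^ 2) ^ 2 by ring, hr2]
    nlinarith [pow_nonneg hq 4]
  have hR : 10 * p ^ 5 + 10 * p ^ 3 * q ^ 2 + 10 * p ^ 2 * q ^ 3 + q ^ 5 ≤ 10 * r ^ 5 := by
    have := mul_le_mul_of_nonneg_right e5 hr0
    have h55 : r ^ 4 * r = r ^ 5 := by ring
    nlinarith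
  have hfin : |x5 + 10 * x3 * v + 10 * V * y3 + y5| ≤ 10 * r ^ 5 := habs.trans hR
  have hsq : (x5 + 10 * x3 * v + 10 * V * y3 + y5) ^ 2 ≤ (10 * r ^ 5) ^ 2 := by
    rw [← sq_abs]
    exact pow_le_pow_left₀ (abs_nonneg _) hfin 2
  calc (x5 + 10 * x3 * v + 10 * V * y3 + y5) ^ 2 ≤ (10 * r ^ 5) ^ 2 := hsq
    _ = 100 * (r ^ 2) ^ 5 := by ring
    _ = 100 * (p ^ 2 + q ^ 2) ^ 5 := by rw [hr2]

lemma alg6 {p q x6 x4 x3 y3 y4 y6 V v : ℝ} (hp : 0 ≤ p) (hq : 0 ≤ q)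
    (hx6 : x6 ≤ 18 * p ^ 6) (hx4u : x4 ≤ 3 * p ^ 4) (hx40 : 0 ≤ x4)
    (hx3 : x3 ^ 2 ≤ p ^ 6) (hy3 : y3 ^ 2 ≤ q ^ 6)
    (hy4u : y4 ≤ q ^ 4) (hy40 : 0 ≤ y4) (hy6 : y6 ≤ q ^ 6)
    (hV : 0 ≤ V) (hv : 0 ≤ v) (hVp : V ≤ p ^ 2) (hvq : v ≤ q ^ 2) :
    x6 + 15 * x4 * v + 20 * x3 * y3 + 15 * V * y4 + y6 ≤ 18 * (p ^ 2 + q ^ 2) ^ 3 := by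
  have h2 : |x3| ≤ p ^ 3 := abs_le_of_sq_le_sq'' (by positivity) (by nlinarith)
  have h3 : |y3| ≤ q ^ 3 := abs_le_of_sq_le_sq'' (by positivity) (by nlinarith)
  have hxy : x3 * y3 ≤ p ^ 3 * q ^ 3 := by
    calc x3 * y3 ≤ |x3 * y3| := le_abs_self _
      _ = |x3| * |y3| := abs_mul _ _
      _ ≤ p ^ 3 * q ^ 3 := mul_le_mul h2 h3 (abs_nonneg _) (by positivity)
  have hx4v : x4 * v ≤ 3 * p ^ 4 * q ^ 2 := by nlinarith
  have hVy4 : V * y4 ≤ p ^ 2 * q ^ 4 := mul_le_mul hVp hy4u hy40 (by positivity)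
  nlinarith [sq_nonneg (3 * p^2 * q - 10/3 * p * q^2), mul_nonneg (mul_nonneg hp hp) (mul_nonneg (mul_nonneg hq hq) (mul_nonneg hq hq)), mul_nonneg (mul_nonneg hq hq) (mul_nonneg (mul_nonneg hq hq) (mul_nonneg hq hq))]
lemma algFinal {p m U C x3 x4 x5 x6 V : ℝ} (hU : 1 ≤ U) (hC : 0 ≤ C) (hp : 0 ≤ p)
    (hp2 : p ^ 2 = U * V) (hV0 : 0 ≤ V) (hmC : m ^ 2 + V ≤ C)
    (hx3 : x3 ^ 2 ≤ p ^ 6) (hx4u : x4 ≤ 3 * p ^ 4) (hx40 : 0 ≤ x4)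
    (hx5 : x5 ^ 2 ≤ 100 * p ^ 10) (hx6u : x6 ≤ 18 * p ^ 6) :
    m ^ 6 + 15 * m ^ 4 * V + 20 * m ^ 3 * x3 + 15 * m ^ 2 * x4 + 6 * m * x5 + x6
      ≤ 64 * U ^ 3 * C ^ 3 + 32 * C ^ 3 := by
  obtain ⟨a, ha0, ham⟩ : ∃ a : ℝ, 0 ≤ a ∧ a = |m| := ⟨|m|, abs_nonneg m, rfl⟩
  have ham2 : a ^ 2 = m ^ 2 := by rw [ham, sq_abs]
  have hVp : V ≤ p ^ 2 := by nlinarith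
  have h3 : |x3| ≤ p ^ 3 := abs_le_of_sq_le_sq'' (by positivity) (by nlinarith)
  have h5 : |x5| ≤ 10 * p ^ 5 := abs_le_of_sq_le_sq'' (by positivity) (by nlinarith)
  have ha4 : a ^ 4 = m ^ 4 := by
    rw [ham, ← abs_pow]; exact abs_of_nonneg (by positivity)
  have ha3 : |m ^ 3| = a ^ 3 := by rw [abs_pow, ← ham]
  have t1 : 15 * m ^ 4 * V ≤ 15 * a ^ 4 * p ^ 2 := by
    have h := mul_le_mul_of_nonneg_left hVp (show (0:ℝ) ≤ 15 * m ^ 4 by positivity)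
    have e : 15 * a ^ 4 * p ^ 2 = 15 * m ^ 4 * p ^ 2 := by rw [ha4]
    nlinarith [h, e]
  have t2 : 20 * m ^ 3 * x3 ≤ 20 * a ^ 3 * p ^ 3 := by
    have h1 : m ^ 3 * x3 ≤ |m ^ 3| * |x3| := (le_abs_self _).trans (le_of_eq (abs_mul _ _))
    have h2 : |m ^ 3| * |x3| ≤ a ^ 3 * p ^ 3 := by
      rw [ha3]; exact mul_le_mul_of_nonneg_left h3 (pow_nonneg ha0 3)
    linarith
  have t3 : 15 * m ^ 2 * x4 ≤ 45 * a ^ 2 * p ^ 4 := by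
    have h := mul_le_mul_of_nonneg_left hx4u (show (0:ℝ) ≤ 15 * m ^ 2 by positivity)
    have e : 45 * a ^ 2 * p ^ 4 = 45 * m ^ 2 * p ^ 4 := by rw [ham2]
    nlinarith [h, e]
  have t4 : 6 * m * x5 ≤ 60 * a * p ^ 5 := by
    have h1 : m * x5 ≤ |m| * |x5| := (le_abs_self _).trans (le_of_eq (abs_mul _ _))
    have h2 : |m| * |x5| ≤ a * (10 * p ^ 5) := by
      rw [← ham]; exact mul_le_mul_of_nonneg_left h5 ha0
    nlinarith [h1, h2]
  have hm6 : m ^ 6 = a ^ 6 := by rw [ham, ← abs_pow, abs_of_nonneg]; positivity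
  have key1 : m ^ 6 + 15 * m ^ 4 * V + 20 * m ^ 3 * x3 + 15 * m ^ 2 * x4 + 6 * m * x5 + x6
      ≤ a ^ 6 + 15 * a ^ 4 * p ^ 2 + 20 * a ^ 3 * p ^ 3 + 45 * a ^ 2 * p ^ 4
        + 60 * a * p ^ 5 + 18 * p ^ 6 := by linarith
  have key2 : a ^ 6 + 15 * a ^ 4 * p ^ 2 + 20 * a ^ 3 * p ^ 3 + 45 * a ^ 2 * p ^ 4
        + 60 * a * p ^ 5 + 18 * p ^ 6 ≤ (3 * a ^ 2 + 4 * p ^ 2) ^ 3 := by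
    nlinarith [sq_nonneg (a ^ 2 * p - a * p ^ 2), sq_nonneg (a * p ^ 2 - p ^ 3),
      mul_nonneg (mul_nonneg ha0 ha0) (mul_nonneg hp hp),
      mul_nonneg ha0 hp, sq_nonneg (a * p), sq_nonneg (a ^ 2 - p ^ 2),
      mul_nonneg (mul_nonneg (mul_nonneg ha0 ha0) (mul_nonneg ha0 ha0)) (mul_nonneg hp hp),
      mul_nonneg (mul_nonneg (mul_nonneg hp hp) (mul_nonneg hp hp)) (mul_nonneg hp hp)]
  have key3 : 3 * a ^ 2 + 4 * p ^ 2 ≤ 4 * U * C := by nlinarith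
  have key4 : (3 * a ^ 2 + 4 * p ^ 2) ^ 3 ≤ (4 * U * C) ^ 3 :=
    pow_le_pow_left₀ (by positivity) key3 3
  have hC3 : 0 ≤ 32 * C ^ 3 := by positivity
  nlinarith [key1, key2, key4]
variable [IsProbabilityMeasure P]
lemma integrable_pow_of_mem6 {Y : Ω → ℝ} (h6 : MemLp Y 6 P) {k : ℕ} (hk : k ≤ 6) :
    Integrable (fun ω => Y ω ^ k) P := by
  have := integrable_pow_mul_pow h6 h6 (j := k) (k := 0) (by omega)
  simpa using this

lemma cs_pow {Y : Ω → ℝ} (h6 : MemLp Y 6 P) {a b : ℕ} (ha : 2 * a ≤ 6) (hb : 2 * b ≤ 6) :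
    (∫ ω, Y ω ^ (a + b) ∂P) ^ 2 ≤ (∫ ω, Y ω ^ (2 * a) ∂P) * (∫ ω, Y ω ^ (2 * b) ∂P) := by
  have key := sq_integral_mul_le (P := P) (f := fun ω => Y ω ^ a) (g := fun ω => Y ω ^ b)
    (by simpa [← pow_mul, mul_comm] using integrable_pow_of_mem6 h6 ha)
    (by simpa [← pow_mul, mul_comm] using integrable_pow_of_mem6 h6 hb)
    (by simpa [← pow_add] using integrable_pow_of_mem6 h6 (by omega : a + b ≤ 6))
  have e1 : ∫ ω, Y ω ^ a * Y ω ^ b ∂P = ∫ ω, Y ω ^ (a + b) ∂P :=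
    integral_congr_ae (Filter.Eventually.of_forall fun ω => by simp [pow_add])
  have e2 : ∫ ω, (Y ω ^ a) ^ 2 ∂P = ∫ ω, Y ω ^ (2 * a) ∂P :=
    integral_congr_ae (Filter.Eventually.of_forall fun ω => by simp [pow_mul, mul_comm])
  have e3 : ∫ ω, (Y ω ^ b) ^ 2 ∂P = ∫ ω, Y ω ^ (2 * b) ∂P :=
    integral_congr_ae (Filter.Eventually.of_forall fun ω => by simp [pow_mul, mul_comm])
  rw [e1, e2, e3] at key
  exact key

/-- Moment chain: all moments up to 6 controlled by `b` when `∫ Y⁶ ≤ b³`. -/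
lemma moment_chain {Y : Ω → ℝ} (h6 : MemLp Y 6 P) {b : ℝ} (hb : 0 ≤ b)
    (h6b : ∫ ω, Y ω ^ 6 ∂P ≤ b ^ 3) :
    (∫ ω, Y ω ^ 2 ∂P) ≤ b ∧ (∫ ω, Y ω ^ 4 ∂P) ≤ b ^ 2 ∧
    (∫ ω, Y ω ^ 3 ∂P) ^ 2 ≤ b ^ 3 ∧ (∫ ω, Y ω ^ 5 ∂P) ^ 2 ≤ b ^ 5 := by
  set v := ∫ ω, Y ω ^ 2 ∂P with hv
  have hv0 : 0 ≤ v := integral_nonneg fun ω => by positivity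
  have h40 : 0 ≤ ∫ ω, Y ω ^ 4 ∂P := integral_nonneg fun ω => by positivity
  have h60 : 0 ≤ ∫ ω, Y ω ^ 6 ∂P := integral_nonneg fun ω => by positivity
  have s22 : v ^ 2 ≤ ∫ ω, Y ω ^ 4 ∂P := by
    have := cs_pow h6 (a := 2) (b := 0) (by norm_num) (by norm_num)
    simpa using this
  have s13 : (∫ ω, Y ω ^ 4 ∂P) ^ 2 ≤ v * ∫ ω, Y ω ^ 6 ∂P := by
    have := cs_pow h6 (a := 1) (b := 3) (by norm_num) (by norm_num)
    norm_num at this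
    convert this using 2
  have s12 : (∫ ω, Y ω ^ 3 ∂P) ^ 2 ≤ v * ∫ ω, Y ω ^ 4 ∂P := by
    have := cs_pow h6 (a := 1) (b := 2) (by norm_num) (by norm_num)
    norm_num at this
    convert this using 2
  have s23 : (∫ ω, Y ω ^ 5 ∂P) ^ 2 ≤ (∫ ω, Y ω ^ 4 ∂P) * ∫ ω, Y ω ^ 6 ∂P := by
    have := cs_pow h6 (a := 2) (b := 3) (by norm_num) (by norm_num)
    norm_num at this
    convert this using 2
  -- v ≤ b
  have hvb : v ≤ b := by
    rcases eq_or_lt_of_le hv0 with h0 | hpos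
    · linarith
    · have h4 : v ^ 4 ≤ v * b ^ 3 := by nlinarith
      have h3 : v ^ 3 ≤ b ^ 3 := by
        have := (mul_le_mul_iff_right₀ hpos).mp (by nlinarith : v * v ^ 3 ≤ v * b ^ 3)
        exact this
      exact le_of_pow_le_pow_left₀ (by norm_num) hb h3
  have hm4 : (∫ ω, Y ω ^ 4 ∂P) ≤ b ^ 2 := by
    have : (∫ ω, Y ω ^ 4 ∂P) ^ 2 ≤ (b ^ 2) ^ 2 := by nlinarith
    exact le_of_pow_le_pow_left₀ (by norm_num) (by positivity) this
  refine ⟨hvb, hm4, ?_, ?_⟩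
  · nlinarith
  · nlinarith
/-- Expectation of a binomial expansion for independent variables. -/
lemma exp_add_pow {f g : Ω → ℝ} (hfm : Measurable f) (hgm : Measurable g)
    (hf : MemLp f 6 P) (hg : MemLp g 6 P) (hind : IndepFun f g P)
    {k : ℕ} (hk : k ≤ 6) :
    ∫ ω, (f ω + g ω) ^ k ∂P
      = ∑ j ∈ range (k + 1),
          (k.choose j : ℝ) * (∫ ω, f ω ^ j ∂P) * (∫ ω, g ω ^ (k - j) ∂P) := by
  have hpt : ∀ ω, (f ω + g ω) ^ k
      = ∑ j ∈ range (k + 1), f ω ^ j * g ω ^ (k - j) * (k.choose j : ℝ) := by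
    intro ω; rw [add_pow]
  rw [integral_congr_ae (Filter.Eventually.of_forall hpt), integral_finset_sum]
  · refine Finset.sum_congr rfl fun j hj => ?_
    have hjk : j + (k - j) ≤ 6 := by
      have := Finset.mem_range.mp hj
      omega
    have hfac : ∫ ω, f ω ^ j * g ω ^ (k - j) ∂P
        = (∫ ω, f ω ^ j ∂P) * (∫ ω, g ω ^ (k - j) ∂P) := by
      have hcind : IndepFun (fun ω => f ω ^ j) (fun ω => g ω ^ (k - j)) P :=
        hind.comp (measurable_id.pow_const j) (measurable_id.pow_const (k - j))
      exact hcind.integral_mul_eq_mul_integral (hfm.pow_const j).aestronglyMeasurable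
        (hgm.pow_const (k - j)).aestronglyMeasurable
    rw [integral_mul_const, hfac]; ring
  · intro j hj
    have hjk : j + (k - j) ≤ 6 := by
      have := Finset.mem_range.mp hj
      omega
    exact (integrable_pow_mul_pow hf hg hjk).mul_const _

/-- Expectation of a binomial expansion with a constant. -/
lemma exp_add_const_pow {f : Ω → ℝ} (hf : MemLp f 6 P) (c : ℝ)
    {k : ℕ} (hk : k ≤ 6) :
    ∫ ω, (f ω + c) ^ k ∂P
      = ∑ j ∈ range (k + 1), (k.choose j : ℝ) * (∫ ω, f ω ^ j ∂P) * c ^ (k - j) := by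
  have hpt : ∀ ω, (f ω + c) ^ k
      = ∑ j ∈ range (k + 1), f ω ^ j * c ^ (k - j) * (k.choose j : ℝ) := by
    intro ω; rw [add_pow]
  rw [integral_congr_ae (Filter.Eventually.of_forall hpt), integral_finset_sum]
  · refine Finset.sum_congr rfl fun j hj => ?_
    rw [show (fun ω => f ω ^ j * c ^ (k - j) * (k.choose j : ℝ))
        = (fun ω => f ω ^ j * (c ^ (k - j) * (k.choose j : ℝ))) by funext ω; ring,
      integral_mul_const]
    ring
  · intro j hj
    have hjk : j + 0 ≤ 6 := by
      have := Finset.mem_range.mp hj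
      omega
    have : Integrable (fun ω => f ω ^ j) P := by
      have := integrable_pow_mul_pow hf hf (j := j) (k := 0) (by omega)
      simpa using this
    exact (this.mul_const _).mul_const _
lemma invariants {n : ℕ} (Y : Fin n → Ω → ℝ) (hYm : ∀ i, Measurable (Y i))
    (hY6 : ∀ i, MemLp (Y i) 6 P)
    (hind : iIndepFun Y P) (hY0 : ∀ i, ∫ ω, Y i ω ∂P = 0)
    {U : ℝ} (hU1 : 1 ≤ U)
    (hm6 : ∀ i, ∫ ω, Y i ω ^ 6 ∂P ≤ (U * ∫ ω, Y i ω ^ 2 ∂P) ^ 3)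
    (s : Finset (Fin n)) :
    (∫ ω, (∑ j ∈ s, Y j ω) ∂P = 0) ∧
    (∫ ω, (∑ j ∈ s, Y j ω) ^ 2 ∂P = ∑ j ∈ s, ∫ ω, Y j ω ^ 2 ∂P) ∧
    ((∫ ω, (∑ j ∈ s, Y j ω) ^ 3 ∂P) ^ 2 ≤ (U * ∑ j ∈ s, ∫ ω, Y j ω ^ 2 ∂P) ^ 3) ∧
    (∫ ω, (∑ j ∈ s, Y j ω) ^ 4 ∂P ≤ 3 * (U * ∑ j ∈ s, ∫ ω, Y j ω ^ 2 ∂P) ^ 2) ∧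
    ((∫ ω, (∑ j ∈ s, Y j ω) ^ 5 ∂P) ^ 2 ≤ 100 * (U * ∑ j ∈ s, ∫ ω, Y j ω ^ 2 ∂P) ^ 5) ∧
    (∫ ω, (∑ j ∈ s, Y j ω) ^ 6 ∂P ≤ 18 * (U * ∑ j ∈ s, ∫ ω, Y j ω ^ 2 ∂P) ^ 3) := by
  classical
  induction s using Finset.induction_on with
  | empty =>
      simp
  | insert _ _ hi =>
      rename_i i s ih
      obtain ⟨IH1, IH2, IH3, IH4, IH5, IH6⟩ := ih
      set T : Ω → ℝ := fun ω => ∑ j ∈ s, Y j ω with hTdef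
      set V : ℝ := ∑ j ∈ s, ∫ ω, Y j ω ^ 2 ∂P with hVdef
      have hv0 : ∀ j, 0 ≤ ∫ ω, Y j ω ^ 2 ∂P := fun j => integral_nonneg fun ω => sq_nonneg _
      have hV0 : 0 ≤ V := Finset.sum_nonneg fun j _ => hv0 j
      set v : ℝ := ∫ ω, Y i ω ^ 2 ∂P with hvdef
      have IH2' : ∫ ω, T ω ^ 2 ∂P = V := IH2
      have hU0 : 0 ≤ U := le_trans zero_le_one hU1
      have hTm : Measurable T := Finset.measurable_sum s fun j _ => hYm j
      have hT6 : MemLp T 6 P := memLp_finsetSum s fun j _ => hY6 j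
      have hTind : IndepFun T (Y i) P := by
        have h := hind.indepFun_finsetSum_of_notMem hYm hi
        have : (∑ j ∈ s, Y j) = T := by
          funext ω; simp [hTdef, Finset.sum_apply]
        rwa [this] at h
      -- conversion of the new sums
      have hconv : ∀ k : ℕ, ∫ ω, (∑ j ∈ insert i s, Y j ω) ^ k ∂P
          = ∫ ω, (T ω + Y i ω) ^ k ∂P := by
        intro k
        refine integral_congr_ae (Filter.Eventually.of_forall fun ω => ?_)
        have h : ∑ j ∈ insert i s, Y j ω = T ω + Y i ω := by
          rw [Finset.sum_insert hi, add_comm]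
        simp only [h]
      have hsum : ∑ j ∈ insert i s, ∫ ω, Y j ω ^ 2 ∂P = v + V := by
        rw [Finset.sum_insert hi]
      -- moment facts for Y i
      obtain ⟨hyv, hy4, hy3, hy5⟩ := moment_chain (hY6 i) (mul_nonneg hU0 (hv0 i)) (hm6 i)
      have hy40 : 0 ≤ ∫ ω, Y i ω ^ 4 ∂P := integral_nonneg fun ω => by positivity
      have hy60 : 0 ≤ ∫ ω, Y i ω ^ 6 ∂P := integral_nonneg fun ω => by positivity
      have hx40 : 0 ≤ ∫ ω, T ω ^ 4 ∂P := integral_nonneg fun ω => by positivity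
      -- p and q
      obtain ⟨p, hp0, hp2⟩ : ∃ p : ℝ, 0 ≤ p ∧ p ^ 2 = U * V :=
        ⟨Real.sqrt (U * V), Real.sqrt_nonneg _, Real.sq_sqrt (mul_nonneg hU0 hV0)⟩
      obtain ⟨q, hq0, hq2⟩ : ∃ q : ℝ, 0 ≤ q ∧ q ^ 2 = U * v :=
        ⟨Real.sqrt (U * v), Real.sqrt_nonneg _, Real.sq_sqrt (mul_nonneg hU0 (hv0 i))⟩
      have hVp : V ≤ p ^ 2 := by nlinarith
      have hvq : v ≤ q ^ 2 := by nlinarith [hv0 i]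
      -- rewrite IH bounds in terms of p, q
      have hx3 : (∫ ω, T ω ^ 3 ∂P) ^ 2 ≤ p ^ 6 := by
        calc (∫ ω, T ω ^ 3 ∂P) ^ 2 ≤ (U * V) ^ 3 := IH3
          _ = p ^ 6 := by rw [← hp2]; ring
      have hx4 : ∫ ω, T ω ^ 4 ∂P ≤ 3 * p ^ 4 := by
        calc ∫ ω, T ω ^ 4 ∂P ≤ 3 * (U * V) ^ 2 := IH4
          _ = 3 * p ^ 4 := by rw [← hp2]; ring
      have hx5 : (∫ ω, T ω ^ 5 ∂P) ^ 2 ≤ 100 * p ^ 10 := by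
        calc (∫ ω, T ω ^ 5 ∂P) ^ 2 ≤ 100 * (U * V) ^ 5 := IH5
          _ = 100 * p ^ 10 := by rw [← hp2]; ring
      have hx6 : ∫ ω, T ω ^ 6 ∂P ≤ 18 * p ^ 6 := by
        calc ∫ ω, T ω ^ 6 ∂P ≤ 18 * (U * V) ^ 3 := IH6
          _ = 18 * p ^ 6 := by rw [← hp2]; ring
      have hy3q : (∫ ω, Y i ω ^ 3 ∂P) ^ 2 ≤ q ^ 6 := by
        calc (∫ ω, Y i ω ^ 3 ∂P) ^ 2 ≤ (U * v) ^ 3 := hy3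
          _ = q ^ 6 := by rw [← hq2]; ring
      have hy4q : ∫ ω, Y i ω ^ 4 ∂P ≤ q ^ 4 := by
        calc ∫ ω, Y i ω ^ 4 ∂P ≤ (U * v) ^ 2 := hy4
          _ = q ^ 4 := by rw [← hq2]; ring
      have hy5q : (∫ ω, Y i ω ^ 5 ∂P) ^ 2 ≤ q ^ 10 := by
        calc (∫ ω, Y i ω ^ 5 ∂P) ^ 2 ≤ (U * v) ^ 5 := hy5
          _ = q ^ 10 := by rw [← hq2]; ring
      have hy6q : ∫ ω, Y i ω ^ 6 ∂P ≤ q ^ 6 := by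
        calc ∫ ω, Y i ω ^ 6 ∂P ≤ (U * v) ^ 3 := hm6 i
          _ = q ^ 6 := by rw [← hq2]; ring
      -- binomial expansions
      have e1 : ∫ ω, (T ω + Y i ω) ^ 1 ∂P = 0 := by
        rw [exp_add_pow hTm (hYm i) hT6 (hY6 i) hTind (by norm_num)]
        simp [Finset.sum_range_succ, IH1, hY0 i]
      have e2 : ∫ ω, (T ω + Y i ω) ^ 2 ∂P = V + v := by
        rw [exp_add_pow hTm (hYm i) hT6 (hY6 i) hTind (by norm_num)]
        simp [Finset.sum_range_succ, IH1, hY0 i, IH2']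
        linarith [hvdef]
      have e3 : ∫ ω, (T ω + Y i ω) ^ 3 ∂P = (∫ ω, T ω ^ 3 ∂P) + ∫ ω, Y i ω ^ 3 ∂P := by
        rw [exp_add_pow hTm (hYm i) hT6 (hY6 i) hTind (by norm_num)]
        simp [Finset.sum_range_succ, IH1, hY0 i, IH2']
        ring
      have e4 : ∫ ω, (T ω + Y i ω) ^ 4 ∂P
          = (∫ ω, T ω ^ 4 ∂P) + 6 * V * v + ∫ ω, Y i ω ^ 4 ∂P := by
        rw [exp_add_pow hTm (hYm i) hT6 (hY6 i) hTind (by norm_num)]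
        simp [Finset.sum_range_succ, IH1, hY0 i, IH2']
        norm_num [Nat.choose]
        ring
      have e5 : ∫ ω, (T ω + Y i ω) ^ 5 ∂P
          = (∫ ω, T ω ^ 5 ∂P) + 10 * (∫ ω, T ω ^ 3 ∂P) * v
            + 10 * V * (∫ ω, Y i ω ^ 3 ∂P) + ∫ ω, Y i ω ^ 5 ∂P := by
        rw [exp_add_pow hTm (hYm i) hT6 (hY6 i) hTind (by norm_num)]
        simp [Finset.sum_range_succ, IH1, hY0 i, IH2']
        norm_num [Nat.choose]
        ring
      have e6 : ∫ ω, (T ω + Y i ω) ^ 6 ∂P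
          = (∫ ω, T ω ^ 6 ∂P) + 15 * (∫ ω, T ω ^ 4 ∂P) * v
            + 20 * (∫ ω, T ω ^ 3 ∂P) * (∫ ω, Y i ω ^ 3 ∂P)
            + 15 * V * (∫ ω, Y i ω ^ 4 ∂P) + ∫ ω, Y i ω ^ 6 ∂P := by
        rw [exp_add_pow hTm (hYm i) hT6 (hY6 i) hTind (by norm_num)]
        simp [Finset.sum_range_succ, IH1, hY0 i, IH2']
        norm_num [Nat.choose]
        ring
      have hWnew : U * ∑ j ∈ insert i s, ∫ ω, Y j ω ^ 2 ∂P = p ^ 2 + q ^ 2 := by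
        rw [hsum]
        have hexp : U * (v + V) = U * v + U * V := by ring
        rw [hexp, ← hp2, ← hq2]
        ring
      refine ⟨?_, ?_, ?_, ?_, ?_, ?_⟩
      · have h1 := hconv 1
        simp only [pow_one] at h1 e1
        rw [h1]
        exact e1
      · rw [hconv 2, hsum, e2]; ring
      · rw [hconv 3, e3, hWnew]
        exact alg3 hp0 hq0 hx3 hy3q
      · rw [hconv 4, e4, hWnew]
        exact alg4 hx4 hy4q hV0 (hv0 i) hVp hvq hp0 hq0
      · rw [hconv 5, e5, hWnew]
        exact alg5 hp0 hq0 hx5 hx3 hy3q hy5q hV0 (hv0 i) hVp hvq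
      · rw [hconv 6, e6, hWnew]
        exact alg6 hp0 hq0 hx6 hx4 hx40 hx3 hy3q hy4q hy40 hy6q hV0 (hv0 i) hVp hvq
end Helpers

open MeasureTheory

/-- Independent random variables `X 1, …, X n` with finite sixth moments,
`E[(∑ X i)²] ≤ C`, and third and sixth central moments controlled by the second central
moments via a constant `U`, satisfy `E[(∑ X i)⁶] ≤ 64 U³ C³ + 32 C³`. -/
theorem stmt9 {Ω : Type*} [MeasurableSpace Ω] (P : Measure Ω) [IsProbabilityMeasure P]
    (n : ℕ) (X : Fin n → Ω → ℝ) (hmeas : ∀ i, Measurable (X i))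
    (hindep : ProbabilityTheory.iIndepFun X P)
    (h6 : ∀ i, MemLp (X i) 6 P)
    (C U : ℝ) (hC : 0 ≤ C) (hU : 0 ≤ U)
    (hsum2 : ∫ ω, (∑ i, X i ω) ^ 2 ∂P ≤ C)
    (h3 : ∀ i, ∫ ω, (X i ω - ∫ ω', X i ω' ∂P) ^ 3 ∂P
      ≤ U * ∫ ω, (X i ω - ∫ ω', X i ω' ∂P) ^ 2 ∂P)
    (h6' : ∀ i, (∫ ω, (X i ω - ∫ ω', X i ω' ∂P) ^ 6 ∂P) ^ ((1 : ℝ) / 3)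
      ≤ U * ∫ ω, (X i ω - ∫ ω', X i ω' ∂P) ^ 2 ∂P) :
    ∫ ω, (∑ i, X i ω) ^ 6 ∂P ≤ 64 * U ^ 3 * C ^ 3 + 32 * C ^ 3 := by
  classical
  set μ : Fin n → ℝ := fun i => ∫ ω', X i ω' ∂P with hμdef
  set Y : Fin n → Ω → ℝ := fun i ω => X i ω - μ i with hYdef
  set m : ℝ := ∑ i, μ i with hmdef
  have hYm : ∀ i, Measurable (Y i) := fun i => (hmeas i).sub measurable_const
  have hY6 : ∀ i, MemLp (Y i) 6 P := fun i => (h6 i).sub (memLp_const (μ i))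
  have hYind : iIndepFun Y P := by
    have := hindep.comp (fun i => fun x => x - μ i) (fun i => measurable_id.sub measurable_const)
    exact this
  have hY0 : ∀ i, ∫ ω, Y i ω ∂P = 0 := by
    intro i
    have h1 : Integrable (X i) P := (h6 i).integrable (by norm_num)
    have : ∫ ω, Y i ω ∂P = (∫ ω, X i ω ∂P) - μ i := by
      rw [hYdef]
      simp only
      rw [integral_sub h1 (integrable_const _), integral_const]
      simp
    rw [this, hμdef]
    simp
  -- sixth moment hypothesis in power form
  have hm6 : ∀ i, ∫ ω, Y i ω ^ 6 ∂P ≤ (U * ∫ ω, Y i ω ^ 2 ∂P) ^ 3 := by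
    intro i
    have hA : (0:ℝ) ≤ ∫ ω, Y i ω ^ 6 ∂P := integral_nonneg fun ω => by positivity
    have h13 : (0:ℝ) ≤ (∫ ω, Y i ω ^ 6 ∂P) ^ ((1:ℝ)/3) := Real.rpow_nonneg hA _
    have hkey : (∫ ω, Y i ω ^ 6 ∂P) ^ ((1:ℝ)/3) ≤ U * ∫ ω, Y i ω ^ 2 ∂P := h6' i
    have heq : ((∫ ω, Y i ω ^ 6 ∂P) ^ ((1:ℝ)/3)) ^ (3:ℕ) = ∫ ω, Y i ω ^ 6 ∂P := by
      rw [← Real.rpow_natCast ((∫ ω, Y i ω ^ 6 ∂P) ^ ((1:ℝ)/3)) 3, ← Real.rpow_mul hA]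
      norm_num
    calc ∫ ω, Y i ω ^ 6 ∂P = ((∫ ω, Y i ω ^ 6 ∂P) ^ ((1:ℝ)/3)) ^ (3:ℕ) := heq.symm
      _ ≤ (U * ∫ ω, Y i ω ^ 2 ∂P) ^ (3:ℕ) := pow_le_pow_left₀ h13 hkey 3
  have hv0 : ∀ i, (0:ℝ) ≤ ∫ ω, Y i ω ^ 2 ∂P := fun i => integral_nonneg fun ω => sq_nonneg _
  -- pointwise decomposition of the sum
  have hSpt : ∀ ω, (∑ i, X i ω) = (∑ i, Y i ω) + m := by
    intro ω
    rw [hmdef, ← Finset.sum_add_distrib]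
    refine Finset.sum_congr rfl fun i _ => ?_
    rw [hYdef]
    ring
  by_cases hdeg : ∀ i, ∫ ω, Y i ω ^ 2 ∂P = 0
  · -- degenerate case : all variances are zero
    have hae : ∀ i, (fun ω => Y i ω) =ᵐ[P] 0 := by
      intro i
      have h2 : (fun ω => Y i ω ^ 2) =ᵐ[P] 0 := by
        rw [← integral_eq_zero_iff_of_nonneg (fun ω => sq_nonneg _)
          (integrable_pow_of_mem6 (hY6 i) (by norm_num : (2:ℕ) ≤ 6))]
        exact hdeg i
      filter_upwards [h2] with ω hω
      have : Y i ω ^ 2 = 0 := hω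
      exact pow_eq_zero_iff (n := 2) (by norm_num) |>.mp this
    have haeS : (fun ω => ∑ i, X i ω) =ᵐ[P] fun _ => m := by
      have hall : ∀ᵐ ω ∂P, ∀ i, Y i ω = 0 := (MeasureTheory.ae_all_iff).mpr hae
      filter_upwards [hall] with ω hω
      rw [hSpt ω]
      simp [Finset.sum_congr rfl fun i _ => hω i]
    have h6int : ∫ ω, (∑ i, X i ω) ^ 6 ∂P = m ^ 6 := by
      have : (fun ω => (∑ i, X i ω) ^ 6) =ᵐ[P] fun _ => m ^ 6 := by
        filter_upwards [haeS] with ω hω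
        rw [hω]
      rw [integral_congr_ae this]
      simp
    have h2int : ∫ ω, (∑ i, X i ω) ^ 2 ∂P = m ^ 2 := by
      have : (fun ω => (∑ i, X i ω) ^ 2) =ᵐ[P] fun _ => m ^ 2 := by
        filter_upwards [haeS] with ω hω
        rw [hω]
      rw [integral_congr_ae this]
      simp
    have hm2 : m ^ 2 ≤ C := by rw [← h2int]; exact hsum2
    have hm20 : (0:ℝ) ≤ m ^ 2 := sq_nonneg m
    rw [h6int]
    have : m ^ 6 = (m ^ 2) ^ 3 := by ring
    rw [this]
    have h1 : (m ^ 2) ^ 3 ≤ C ^ 3 := pow_le_pow_left₀ hm20 hm2 3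
    nlinarith [pow_nonneg hC 3, pow_nonneg hU 3, mul_nonneg (mul_nonneg (by norm_num : (0:ℝ) ≤ 64) (pow_nonneg hU 3)) (pow_nonneg hC 3)]
  · -- main case : some variance is positive, hence U ≥ 1
    push_neg at hdeg
    obtain ⟨i₀, hi₀⟩ := hdeg
    have hvpos : 0 < ∫ ω, Y i₀ ω ^ 2 ∂P := lt_of_le_of_ne (hv0 i₀) (Ne.symm hi₀)
    have hU1 : 1 ≤ U := by
      obtain ⟨hyv, _, _, _⟩ := moment_chain (hY6 i₀) (mul_nonneg hU (hv0 i₀)) (hm6 i₀)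
      nlinarith
    obtain ⟨IH1, IH2, IH3, IH4, IH5, IH6⟩ :=
      invariants Y hYm hY6 hYind hY0 hU1 hm6 Finset.univ
    set T : Ω → ℝ := fun ω => ∑ j, Y j ω with hTdef
    set Vt : ℝ := ∑ j, ∫ ω, Y j ω ^ 2 ∂P with hVtdef
    have hVt0 : 0 ≤ Vt := Finset.sum_nonneg fun j _ => hv0 j
    have hT6 : MemLp T 6 P := memLp_finsetSum _ fun j _ => hY6 j
    have IH2' : ∫ ω, T ω ^ 2 ∂P = Vt := IH2
    -- second moment identity
    have hconv : ∀ k : ℕ, ∫ ω, (∑ i, X i ω) ^ k ∂P = ∫ ω, (T ω + m) ^ k ∂P := by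
      intro k
      refine integral_congr_ae (Filter.Eventually.of_forall fun ω => ?_)
      simp only
      rw [hSpt ω]
    have E2 : ∫ ω, (T ω + m) ^ 2 ∂P = Vt + m ^ 2 := by
      rw [exp_add_const_pow hT6 m (by norm_num)]
      simp [Finset.sum_range_succ, IH1, IH2']
      norm_num [Nat.choose]
      ring
    have hmC : m ^ 2 + Vt ≤ C := by
      have := hsum2
      rw [hconv 2, E2] at this
      linarith
    have E6 : ∫ ω, (T ω + m) ^ 6 ∂P
        = m ^ 6 + 15 * m ^ 4 * Vt + 20 * m ^ 3 * (∫ ω, T ω ^ 3 ∂P)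
          + 15 * m ^ 2 * (∫ ω, T ω ^ 4 ∂P) + 6 * m * (∫ ω, T ω ^ 5 ∂P)
          + ∫ ω, T ω ^ 6 ∂P := by
      rw [exp_add_const_pow hT6 m (by norm_num)]
      simp [Finset.sum_range_succ, IH1, IH2']
      norm_num [Nat.choose]
      ring
    obtain ⟨p, hp0, hp2⟩ : ∃ p : ℝ, 0 ≤ p ∧ p ^ 2 = U * Vt :=
      ⟨Real.sqrt (U * Vt), Real.sqrt_nonneg _,
        Real.sq_sqrt (mul_nonneg (le_trans zero_le_one hU1) hVt0)⟩
    have hx3 : (∫ ω, T ω ^ 3 ∂P) ^ 2 ≤ p ^ 6 := by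
      calc (∫ ω, T ω ^ 3 ∂P) ^ 2 ≤ (U * Vt) ^ 3 := IH3
        _ = p ^ 6 := by rw [← hp2]; ring
    have hx4 : ∫ ω, T ω ^ 4 ∂P ≤ 3 * p ^ 4 := by
      calc ∫ ω, T ω ^ 4 ∂P ≤ 3 * (U * Vt) ^ 2 := IH4
        _ = 3 * p ^ 4 := by rw [← hp2]; ring
    have hx40 : 0 ≤ ∫ ω, T ω ^ 4 ∂P := integral_nonneg fun ω => by positivity
    have hx5 : (∫ ω, T ω ^ 5 ∂P) ^ 2 ≤ 100 * p ^ 10 := by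
      calc (∫ ω, T ω ^ 5 ∂P) ^ 2 ≤ 100 * (U * Vt) ^ 5 := IH5
        _ = 100 * p ^ 10 := by rw [← hp2]; ring
    have hx6 : ∫ ω, T ω ^ 6 ∂P ≤ 18 * p ^ 6 := by
      calc ∫ ω, T ω ^ 6 ∂P ≤ 18 * (U * Vt) ^ 3 := IH6
        _ = 18 * p ^ 6 := by rw [← hp2]; ring
    rw [hconv 6, E6]
    exact algFinal hU1 hC hp0 hp2 hVt0 hmC hx3 hx4 hx40 hx5 hx6
end

section
/- Let X_1, …, X_n be independent standard normal random variables and let a_1, …, a_n be nonnegative real constants with ∑_{i=1}^n a_i > 0. Then for every ε > 0, P(∑_{i=1}^n a_i X_i² ≤ ε·∑_{i=1}^n a_i) ≤ (e·ε)^{1/2}. -/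
open MeasureTheory Real ProbabilityTheory
open scoped ENNReal NNReal

lemma real_gauss_int (s : ℝ) (hs : 0 ≤ s) :
    ∫ x : ℝ, gaussianPDFReal 0 1 x * Real.exp (-s * x ^ 2) =
      Real.sqrt (1 / (1 + 2 * s)) := by
  have hb : (0:ℝ) < s + 1/2 := by linarith
  have h1 : ∀ x : ℝ, gaussianPDFReal 0 1 x * Real.exp (-s * x ^ 2)
      = (Real.sqrt (2 * π))⁻¹ * Real.exp (-(s + 1/2) * x ^ 2) := by
    intro x
    simp only [gaussianPDFReal, NNReal.coe_one, mul_one, sub_zero]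
    rw [mul_assoc, ← Real.exp_add]
    congr 2
    ring
  simp_rw [h1]
  rw [MeasureTheory.integral_const_mul, integral_gaussian, ← Real.sqrt_inv,
    ← Real.sqrt_mul (by positivity)]
  congr 1
  have hπ : π ≠ 0 := Real.pi_ne_zero
  field_simp
  ring

lemma lint_gauss (s : ℝ) (hs : 0 ≤ s) :
    ∫⁻ x, ENNReal.ofReal (Real.exp (-s * x ^ 2)) ∂(gaussianReal 0 1) =
      ENNReal.ofReal (Real.sqrt (1 / (1 + 2 * s))) := by
  have hmeas : Measurable fun x : ℝ => ENNReal.ofReal (Real.exp (-s * x ^ 2)) := by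
    fun_prop
  rw [gaussianReal_of_var_ne_zero 0 one_ne_zero,
    lintegral_withDensity_eq_lintegral_mul _ (measurable_gaussianPDF 0 1) hmeas]
  have heq : ∀ x : ℝ, (gaussianPDF 0 1 * fun x => ENNReal.ofReal (Real.exp (-s * x ^ 2))) x =
      ENNReal.ofReal (gaussianPDFReal 0 1 x * Real.exp (-s * x ^ 2)) := by
    intro x
    simp [gaussianPDF, ENNReal.ofReal_mul (gaussianPDFReal_nonneg 0 1 x)]
  simp_rw [heq]
  have hint : Integrable (fun x : ℝ => gaussianPDFReal 0 1 x * Real.exp (-s * x ^ 2)) := by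
    refine (integrable_gaussianPDFReal 0 1).mono ?_ (ae_of_all _ fun x => ?_)
    · exact ((measurable_gaussianPDFReal 0 1).mul (by fun_prop)).aestronglyMeasurable
    · have h1 : Real.exp (-s * x ^ 2) ≤ 1 := Real.exp_le_one_iff.2 (by nlinarith [sq_nonneg x])
      have h0 := gaussianPDFReal_nonneg 0 1 x
      rw [Real.norm_eq_abs, Real.norm_eq_abs, abs_of_nonneg (by positivity), abs_of_nonneg h0]
      nlinarith [Real.exp_pos (-s * x ^ 2)]
  rw [← ofReal_integral_eq_lintegral_ofReal hint
    (ae_of_all _ fun x => mul_nonneg (gaussianPDFReal_nonneg 0 1 x) (Real.exp_pos _).le),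
    real_gauss_int s hs]

/-- If `X 1, …, X n` are i.i.d. standard normal and `a i ≥ 0` with
`∑ a i > 0`, then for every `ε > 0`,
`P(∑ a i X i ² ≤ ε ∑ a i) ≤ (e ε)^(1/2)`. -/
theorem stmt13 {Ω : Type*} [MeasurableSpace Ω] (P : Measure Ω) [IsProbabilityMeasure P]
    (n : ℕ) (X : Fin n → Ω → ℝ) (hmeas : ∀ i, Measurable (X i))
    (hindep : ProbabilityTheory.iIndepFun X P)
    (hgauss : ∀ i, Measure.map (X i) P = ProbabilityTheory.gaussianReal 0 1)
    (a : Fin n → ℝ) (ha : ∀ i, 0 ≤ a i) (hsum : 0 < ∑ i, a i) :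
    ∀ ε : ℝ, 0 < ε →
      P {ω | ∑ i, a i * (X i ω) ^ 2 ≤ ε * ∑ i, a i}
        ≤ ENNReal.ofReal (Real.sqrt (Real.exp 1 * ε)) := by
  intro ε hε
  set A := ∑ i, a i with hA
  rcases le_or_gt 1 ε with h1 | h1
  · -- trivial case ε ≥ 1
    refine le_trans prob_le_one ?_
    rw [ENNReal.one_le_ofReal]
    calc (1:ℝ) = Real.sqrt 1 := Real.sqrt_one.symm
      _ ≤ _ := Real.sqrt_le_sqrt (by nlinarith [Real.add_one_le_exp 1])
  · -- main case ε < 1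
    have hA0 : A ≠ 0 := ne_of_gt hsum
    set s : ℝ := (1 - ε) / (2 * ε) with hs_def
    have hs : 0 ≤ s := by
      apply div_nonneg <;> linarith
    have hs1 : 1 + 2 * s = 1 / ε := by
      rw [hs_def]; field_simp; ring
    set lam : ℝ := s / A with hlam_def
    have hlam : 0 ≤ lam := div_nonneg hs hsum.le
    set g : Ω → ℝ≥0∞ := fun ω => ENNReal.ofReal (Real.exp (-lam * ∑ i, a i * X i ω ^ 2))
      with hg_def
    have hgm : Measurable g := by
      apply Measurable.ennreal_ofReal
      apply Real.measurable_exp.comp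
      apply Measurable.const_mul
      exact Finset.measurable_sum _ fun i _ => ((hmeas i).pow_const 2).const_mul _
    set c : ℝ := Real.exp (-(s * ε)) with hc_def
    have hsub : {ω | ∑ i, a i * X i ω ^ 2 ≤ ε * A} ⊆ {ω | ENNReal.ofReal c ≤ g ω} := by
      intro ω hω
      simp only [Set.mem_setOf_eq] at hω ⊢
      apply ENNReal.ofReal_le_ofReal
      apply Real.exp_le_exp.2
      have h2 : lam * (∑ i, a i * X i ω ^ 2) ≤ lam * (ε * A) :=
        mul_le_mul_of_nonneg_left hω hlam
      have h3 : lam * (ε * A) = s * ε := by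
        rw [hlam_def]; field_simp
      nlinarith
    have markov : P {ω | ENNReal.ofReal c ≤ g ω} ≤ (∫⁻ ω, g ω ∂P) / ENNReal.ofReal c :=
      meas_ge_le_lintegral_div hgm.aemeasurable
        (ENNReal.ofReal_pos.2 (Real.exp_pos _)).ne' ENNReal.ofReal_ne_top
    have hw1 : ∑ i, a i / A = 1 := by
      rw [← Finset.sum_div, ← hA, div_self hA0]
    have hpoint : ∀ ω, Real.exp (-lam * ∑ i, a i * X i ω ^ 2)
        ≤ ∑ i, (a i / A) * Real.exp (-s * X i ω ^ 2) := by
      intro ω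
      have hjen := convexOn_exp.map_sum_le (t := Finset.univ) (w := fun i => a i / A)
        (p := fun i => -s * X i ω ^ 2) (fun i _ => div_nonneg (ha i) hsum.le) hw1
        (fun i _ => Set.mem_univ _)
      simp only [smul_eq_mul] at hjen
      have harg : -lam * ∑ i, a i * X i ω ^ 2 = ∑ i, (a i / A) * (-s * X i ω ^ 2) := by
        rw [Finset.mul_sum]
        refine Finset.sum_congr rfl fun i _ => ?_
        rw [hlam_def]; ring
      rw [harg]
      exact hjen
    have hterm : ∀ i, ∫⁻ ω, ENNReal.ofReal (Real.exp (-s * X i ω ^ 2)) ∂P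
        = ENNReal.ofReal (Real.sqrt ε) := by
      intro i
      have hmg : Measurable fun x : ℝ => ENNReal.ofReal (Real.exp (-s * x ^ 2)) := by fun_prop
      rw [← lintegral_map hmg (hmeas i), hgauss i, lint_gauss s hs, hs1, one_div_one_div]
    have hlint : ∫⁻ ω, g ω ∂P ≤ ENNReal.ofReal (Real.sqrt ε) := by
      calc ∫⁻ ω, g ω ∂P
          ≤ ∫⁻ ω, ENNReal.ofReal (∑ i, (a i / A) * Real.exp (-s * X i ω ^ 2)) ∂P :=
            lintegral_mono fun ω => ENNReal.ofReal_le_ofReal (hpoint ω)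
        _ = ∑ i, ENNReal.ofReal (a i / A) * ∫⁻ ω, ENNReal.ofReal (Real.exp (-s * X i ω ^ 2)) ∂P := by
            have heq : ∀ ω : Ω, ENNReal.ofReal (∑ i, (a i / A) * Real.exp (-s * X i ω ^ 2))
                = ∑ i, ENNReal.ofReal (a i / A) * ENNReal.ofReal (Real.exp (-s * X i ω ^ 2)) := by
              intro ω
              rw [ENNReal.ofReal_sum_of_nonneg fun i _ =>
                mul_nonneg (div_nonneg (ha i) hsum.le) (Real.exp_pos _).le]
              exact Finset.sum_congr rfl fun i _ =>
                ENNReal.ofReal_mul (div_nonneg (ha i) hsum.le)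
            simp_rw [heq]
            rw [lintegral_finset_sum]
            · exact Finset.sum_congr rfl fun i _ => lintegral_const_mul _ (by fun_prop)
            · intro i _
              exact Measurable.const_mul (by fun_prop) _
        _ = ∑ i, ENNReal.ofReal (a i / A) * ENNReal.ofReal (Real.sqrt ε) := by
            exact Finset.sum_congr rfl fun i _ => by rw [hterm i]
        _ = ENNReal.ofReal (Real.sqrt ε) := by
            rw [← Finset.sum_mul, ← ENNReal.ofReal_sum_of_nonneg
              (fun i _ => div_nonneg (ha i) hsum.le), hw1, ENNReal.ofReal_one, one_mul]
    refine le_trans (le_trans (measure_mono hsub) markov) ?_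
    calc (∫⁻ ω, g ω ∂P) / ENNReal.ofReal c
        ≤ ENNReal.ofReal (Real.sqrt ε) / ENNReal.ofReal c :=
          ENNReal.div_le_div_right hlint _
      _ = ENNReal.ofReal (Real.sqrt ε / c) :=
          (ENNReal.ofReal_div_of_pos (Real.exp_pos _)).symm
      _ ≤ ENNReal.ofReal (Real.sqrt (Real.exp 1 * ε)) := by
          apply ENNReal.ofReal_le_ofReal
          have hse : s * ε = (1 - ε) / 2 := by
            rw [hs_def]; field_simp
          rw [Real.sqrt_mul (Real.exp_pos 1).le, ← Real.exp_half, hc_def, Real.exp_neg,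
            div_eq_mul_inv, inv_inv, hse]
          have hexp : Real.exp ((1 - ε) / 2) ≤ Real.exp (1 / 2) :=
            Real.exp_le_exp.2 (by linarith)
          nlinarith [Real.sqrt_nonneg ε, Real.exp_pos ((1 - ε) / 2)]
end

section
/- Let D ∈ ℝ^{n×n} be a diagonal real matrix whose diagonal entries satisfy u ≤ D_{ii} ≤ U for all i, where 0 ≤ u ≤ U, and let A ∈ ℝ^{n×n} be a real symmetric matrix. Then for every k = 1, …, n, denoting by λ_k(M) the k-th largest eigenvalue of a real symmetric matrix M, one has u·λ_k(A²) ≤ λ_k(A D A) ≤ U·λ_k(A²). -/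
open scoped Classical

/-- The `k`-th largest eigenvalue (1-indexed, counted with multiplicity) of a real symmetric
(Hermitian) `n × n` matrix: sort the eigenvalues in ascending order and take the entry at
position `n - k`.  Junk value `0` for non-Hermitian matrices. -/
noncomputable def kthLargestEig {n : ℕ} (A : Matrix (Fin n) (Fin n) ℝ) (k : ℕ) : ℝ :=
  if h : A.IsHermitian then
    ((Multiset.sort (Finset.univ.val.map h.eigenvalues) (· ≤ ·)).getD (n - k) 0)
  else 0

open Matrix
open scoped RealInnerProductSpace
section aux

variable {n : ℕ}

open scoped RealInnerProductSpace

/-- In a sorted (≤) list, at least `length - p` elements are `≥ l[p]`. -/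
lemma aux_countP_ge {l : List ℝ} (hs : l.Pairwise (· ≤ ·)) {p : ℕ} (hp : p < l.length) :
    l.length - p ≤ l.countP (fun x => decide (l.getD p 0 ≤ x)) := by
  have ht : l.getD p 0 = l[p] := List.getD_eq_getElem l 0 hp
  have hsplit : l.countP (fun x => decide (l.getD p 0 ≤ x)) =
      (l.take p).countP (fun x => decide (l.getD p 0 ≤ x)) +
      (l.drop p).countP (fun x => decide (l.getD p 0 ≤ x)) := by
    rw [← List.countP_append, List.take_append_drop]
  have hall : ∀ a ∈ l.drop p, (fun x => decide (l.getD p 0 ≤ x)) a = true := by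
    intro a ha
    obtain ⟨j, hj, rfl⟩ := List.mem_iff_getElem.mp ha
    rw [List.getElem_drop]
    simp only [decide_eq_true_eq, ht]
    rcases Nat.eq_zero_or_pos j with h0 | h0
    · subst h0; simp
    · exact (List.pairwise_iff_getElem.mp hs) p (p + j) hp
        (by simp only [List.length_drop] at hj; omega) (by omega)
  have hdrop : (l.drop p).countP (fun x => decide (l.getD p 0 ≤ x)) = (l.drop p).length :=
    List.countP_eq_length.mpr hall
  have : l.length - p = (l.drop p).length := List.length_drop.symm
  omega

/-- In a sorted (≤) list, at least `p + 1` elements are `≤ l[p]`. -/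
lemma aux_countP_le {l : List ℝ} (hs : l.Pairwise (· ≤ ·)) {p : ℕ} (hp : p < l.length) :
    p + 1 ≤ l.countP (fun x => decide (x ≤ l.getD p 0)) := by
  have ht : l.getD p 0 = l[p] := List.getD_eq_getElem l 0 hp
  have hsplit : l.countP (fun x => decide (x ≤ l.getD p 0)) =
      (l.take (p+1)).countP (fun x => decide (x ≤ l.getD p 0)) +
      (l.drop (p+1)).countP (fun x => decide (x ≤ l.getD p 0)) := by
    rw [← List.countP_append, List.take_append_drop]
  have hall : ∀ a ∈ l.take (p+1), (fun x => decide (x ≤ l.getD p 0)) a = true := by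
    intro a ha
    obtain ⟨j, hj, rfl⟩ := List.mem_iff_getElem.mp ha
    rw [List.getElem_take]
    simp only [decide_eq_true_eq, ht]
    have hjl : j < p + 1 := lt_of_lt_of_le hj (by simp [List.length_take])
    rcases Nat.lt_or_ge j p with h0 | h0
    · exact (List.pairwise_iff_getElem.mp hs) j p (by omega) hp h0
    · have : j = p := by omega
      subst this; simp
  have htake : (l.take (p+1)).countP (fun x => decide (x ≤ l.getD p 0)) = (l.take (p+1)).length :=
    List.countP_eq_length.mpr hall
  have : (l.take (p+1)).length = p + 1 := by simp [List.length_take]; omega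
  omega

/-- At least `k` of the values of `f` are `≥` the `k`-th largest value. -/
lemma aux_card_ge (f : Fin n → ℝ) {k : ℕ} (hk1 : 1 ≤ k) (hk2 : k ≤ n) :
    k ≤ (Finset.univ.filter fun i =>
        (Multiset.sort (Finset.univ.val.map f) (· ≤ ·)).getD (n - k) 0 ≤ f i).card := by
  set l := Multiset.sort (Finset.univ.val.map f) (· ≤ ·) with hl
  have hlen : l.length = n := by simp [hl]
  have hp : n - k < l.length := by omega
  set t := l.getD (n - k) 0 with htdef
  have h1 : l.length - (n - k) ≤ l.countP (fun x => decide (t ≤ x)) :=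
    aux_countP_ge (Multiset.pairwise_sort _ _) hp
  have h2 : l.countP (fun x => decide (t ≤ x)) =
      Multiset.countP (fun x => t ≤ x) (Finset.univ.val.map f) := by
    rw [← Multiset.coe_countP, hl, Multiset.sort_eq]
  have h3 : Multiset.countP (fun x => t ≤ x) (Finset.univ.val.map f) =
      (Finset.univ.filter fun i => t ≤ f i).card := by
    rw [Multiset.countP_map]; rfl
  omega

/-- At least `n - k + 1` of the values of `f` are `≤` the `k`-th largest value. -/
lemma aux_card_le (f : Fin n → ℝ) {k : ℕ} (hk1 : 1 ≤ k) (hk2 : k ≤ n) :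
    n - k + 1 ≤ (Finset.univ.filter fun i =>
        f i ≤ (Multiset.sort (Finset.univ.val.map f) (· ≤ ·)).getD (n - k) 0).card := by
  set l := Multiset.sort (Finset.univ.val.map f) (· ≤ ·) with hl
  have hlen : l.length = n := by simp [hl]
  have hp : n - k < l.length := by omega
  set t := l.getD (n - k) 0 with htdef
  have h1 : (n - k) + 1 ≤ l.countP (fun x => decide (x ≤ t)) :=
    aux_countP_le (Multiset.pairwise_sort _ _) hp
  have h2 : l.countP (fun x => decide (x ≤ t)) =
      Multiset.countP (fun x => x ≤ t) (Finset.univ.val.map f) := by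
    rw [← Multiset.coe_countP, hl, Multiset.sort_eq]
  have h3 : Multiset.countP (fun x => x ≤ t) (Finset.univ.val.map f) =
      (Finset.univ.filter fun i => f i ≤ t).card := by
    rw [Multiset.countP_map]; rfl
  omega

/-- Coordinates outside `S` vanish for vectors in the span of basis vectors indexed by `S`. -/
lemma aux_inner_eq_zero (b : OrthonormalBasis (Fin n) ℝ (EuclideanSpace ℝ (Fin n)))
    (S : Finset (Fin n)) {x : EuclideanSpace ℝ (Fin n)}
    (hx : x ∈ Submodule.span ℝ (b '' (S : Set (Fin n)))) {i : Fin n} (hi : i ∉ S) :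
    ⟪b i, x⟫ = 0 := by
  induction hx using Submodule.span_induction with
  | mem y hy =>
      obtain ⟨j, hj, rfl⟩ := hy
      exact b.orthonormal.2 (fun h => hi (h ▸ hj))
  | zero => simp
  | add y z _ _ hy hz => rw [inner_add_right, hy, hz, add_zero]
  | smul c y _ hy => rw [inner_smul_right, hy, mul_zero]

/-- Quadratic form expansion in the eigenbasis. -/
lemma aux_quad_eq {M : Matrix (Fin n) (Fin n) ℝ} (hM : M.IsHermitian)
    (x : EuclideanSpace ℝ (Fin n)) :
    ⟪x, Matrix.toEuclideanLin M x⟫ =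
      ∑ i, hM.eigenvalues i * ⟪hM.eigenvectorBasis i, x⟫ ^ 2 := by
  set b := hM.eigenvectorBasis
  rw [← b.sum_inner_mul_inner x (Matrix.toEuclideanLin M x)]
  refine Finset.sum_congr rfl fun i _ => ?_
  have hsym : (Matrix.toEuclideanLin M).IsSymmetric := Matrix.isHermitian_iff_isSymmetric.mp hM
  have hMb : Matrix.toEuclideanLin M (b i) = hM.eigenvalues i • b i := by
    have h := hM.mulVec_eigenvectorBasis i
    ext j
    have h2 : (Matrix.toEuclideanLin M (b i)) j = (M *ᵥ (WithLp.equiv 2 _) (b i)) j := by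
      rw [Matrix.toEuclideanLin_apply]; rfl
    rw [h2]; exact congrFun h j
  have h1 : ⟪b i, Matrix.toEuclideanLin M x⟫ = hM.eigenvalues i * ⟪b i, x⟫ := by
    rw [← hsym (b i) x, hMb, inner_smul_left]
    simp [RCLike.star_def]
  rw [h1, real_inner_comm x (b i)]
  ring

/-- Norm-squared expansion in an orthonormal basis. -/
lemma aux_norm_eq (b : OrthonormalBasis (Fin n) ℝ (EuclideanSpace ℝ (Fin n)))
    (x : EuclideanSpace ℝ (Fin n)) :
    ⟪x, x⟫ = ∑ i, ⟪b i, x⟫ ^ 2 := by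
  rw [← b.sum_inner_mul_inner x x]
  refine Finset.sum_congr rfl fun i _ => ?_
  rw [real_inner_comm x (b i)]; ring

lemma aux_finrank_span (b : OrthonormalBasis (Fin n) ℝ (EuclideanSpace ℝ (Fin n)))
    (S : Finset (Fin n)) :
    Module.finrank ℝ (Submodule.span ℝ (b '' (S : Set (Fin n)))) = S.card := by
  have hli : LinearIndependent ℝ (fun i : (S : Set (Fin n)) => b i) :=
    b.orthonormal.linearIndependent.comp _ Subtype.val_injective
  rw [Set.image_eq_range]
  rw [finrank_span_eq_card hli]
  simp

/-- Quadratic-form lower bound on the span of eigenvectors with large eigenvalues. -/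
lemma aux_quad_ge {M : Matrix (Fin n) (Fin n) ℝ} (hM : M.IsHermitian) (t : ℝ)
    {S : Finset (Fin n)} (hS : ∀ i ∈ S, t ≤ hM.eigenvalues i)
    {x : EuclideanSpace ℝ (Fin n)}
    (hx : x ∈ Submodule.span ℝ (hM.eigenvectorBasis '' (S : Set (Fin n)))) :
    t * ⟪x, x⟫ ≤ ⟪x, Matrix.toEuclideanLin M x⟫ := by
  rw [aux_quad_eq hM x, aux_norm_eq hM.eigenvectorBasis x, Finset.mul_sum]
  refine Finset.sum_le_sum fun i _ => ?_
  by_cases hi : i ∈ S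
  · have := hS i hi
    nlinarith [sq_nonneg (⟪hM.eigenvectorBasis i, x⟫)]
  · rw [aux_inner_eq_zero _ _ hx hi]; simp

/-- Quadratic-form upper bound on the span of eigenvectors with small eigenvalues. -/
lemma aux_quad_le {M : Matrix (Fin n) (Fin n) ℝ} (hM : M.IsHermitian) (t : ℝ)
    {S : Finset (Fin n)} (hS : ∀ i ∈ S, hM.eigenvalues i ≤ t)
    {x : EuclideanSpace ℝ (Fin n)}
    (hx : x ∈ Submodule.span ℝ (hM.eigenvectorBasis '' (S : Set (Fin n)))) :
    ⟪x, Matrix.toEuclideanLin M x⟫ ≤ t * ⟪x, x⟫ := by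
  rw [aux_quad_eq hM x, aux_norm_eq hM.eigenvectorBasis x, Finset.mul_sum]
  refine Finset.sum_le_sum fun i _ => ?_
  by_cases hi : i ∈ S
  · have := hS i hi
    nlinarith [sq_nonneg (⟪hM.eigenvectorBasis i, x⟫)]
  · rw [aux_inner_eq_zero _ _ hx hi]; simp

/-- Key existence lemma: a nonzero vector witnessing both eigenvalue bounds. -/
lemma aux_exists_vec {M N : Matrix (Fin n) (Fin n) ℝ} (hM : M.IsHermitian) (hN : N.IsHermitian)
    {k : ℕ} (hk1 : 1 ≤ k) (hk2 : k ≤ n) :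
    ∃ x : EuclideanSpace ℝ (Fin n), x ≠ 0 ∧
      kthLargestEig M k * ⟪x, x⟫ ≤ ⟪x, Matrix.toEuclideanLin M x⟫ ∧
      ⟪x, Matrix.toEuclideanLin N x⟫ ≤ kthLargestEig N k * ⟪x, x⟫ := by
  have hsM : kthLargestEig M k =
      (Multiset.sort (Finset.univ.val.map hM.eigenvalues) (· ≤ ·)).getD (n - k) 0 := by
    rw [kthLargestEig, dif_pos hM]
  have hsN : kthLargestEig N k =
      (Multiset.sort (Finset.univ.val.map hN.eigenvalues) (· ≤ ·)).getD (n - k) 0 := by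
    rw [kthLargestEig, dif_pos hN]
  set s := kthLargestEig M k
  set t := kthLargestEig N k
  set S := Finset.univ.filter fun i => s ≤ hM.eigenvalues i with hSdef
  set T := Finset.univ.filter fun i => hN.eigenvalues i ≤ t with hTdef
  have hcS : k ≤ S.card := by rw [hSdef, hsM]; exact aux_card_ge hM.eigenvalues hk1 hk2
  have hcT : n - k + 1 ≤ T.card := by rw [hTdef, hsN]; exact aux_card_le hN.eigenvalues hk1 hk2
  set V := Submodule.span ℝ (hM.eigenvectorBasis '' (S : Set (Fin n)))
  set W := Submodule.span ℝ (hN.eigenvectorBasis '' (T : Set (Fin n)))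
  have hV : Module.finrank ℝ V = S.card := aux_finrank_span _ _
  have hW : Module.finrank ℝ W = T.card := aux_finrank_span _ _
  have hsum := Submodule.finrank_sup_add_finrank_inf_eq V W
  have hle : Module.finrank ℝ ↥(V ⊔ W) ≤ n := by
    have := Submodule.finrank_le (V ⊔ W)
    rwa [finrank_euclideanSpace_fin] at this
  have hpos : 0 < Module.finrank ℝ ↥(V ⊓ W) := by omega
  have hne : V ⊓ W ≠ ⊥ := by
    intro h
    rw [h, finrank_bot] at hpos
    exact lt_irrefl 0 hpos
  obtain ⟨x, hxmem, hx0⟩ := (Submodule.ne_bot_iff _).mp hne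
  refine ⟨x, hx0, ?_, ?_⟩
  · exact aux_quad_ge hM s (fun i hi => (Finset.mem_filter.mp hi).2) hxmem.1
  · exact aux_quad_le hN t (fun i hi => (Finset.mem_filter.mp hi).2) hxmem.2

/-- Convert matrix dot-product quadratic forms to inner products. -/
lemma aux_inner_eq_dot (M : Matrix (Fin n) (Fin n) ℝ) (x : EuclideanSpace ℝ (Fin n)) :
    ⟪x, Matrix.toEuclideanLin M x⟫ =
      dotProduct (star ((WithLp.equiv 2 _) x)) (M *ᵥ (WithLp.equiv 2 _) x) := by
  simp only [PiLp.inner_apply, RCLike.inner_apply, Matrix.toEuclideanLin_apply,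
    dotProduct, Pi.star_apply, star_trivial, starRingEnd_apply]
  exact Finset.sum_congr rfl fun i _ => mul_comm _ _

end aux

/-- Let `D` be diagonal with diagonal entries in `[u, U]` (`0 ≤ u ≤ U`) and
`A` real symmetric.  Then for each `k = 1, …, n`,
`u · λ_k(A²) ≤ λ_k(A D A) ≤ U · λ_k(A²)`, where `λ_k` is the `k`-th largest eigenvalue. -/
theorem stmt14 {n : ℕ} (A D : Matrix (Fin n) (Fin n) ℝ)
    (hA : A.IsSymm) (d : Fin n → ℝ) (hD : D = Matrix.diagonal d)
    (u U : ℝ) (hu : 0 ≤ u) (huU : u ≤ U) (hd : ∀ i, u ≤ d i ∧ d i ≤ U) :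
    ∀ k : ℕ, 1 ≤ k → k ≤ n →
      u * kthLargestEig (A * A) k ≤ kthLargestEig (A * D * A) k ∧
      kthLargestEig (A * D * A) k ≤ U * kthLargestEig (A * A) k := by
  intro k hk1 hk2
  have hAH : Aᴴ = A := by
    rw [Matrix.conjTranspose]
    ext i j; simpa using hA.apply i j
  have hAA : (A * A).IsHermitian := by
    rw [Matrix.IsHermitian, Matrix.conjTranspose_mul, hAH]
  have hADA : (A * D * A).IsHermitian := by
    rw [Matrix.IsHermitian, Matrix.conjTranspose_mul, Matrix.conjTranspose_mul, hAH, hD]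
    rw [show (Matrix.diagonal d)ᴴ = Matrix.diagonal d from (Matrix.isHermitian_diagonal d).eq]
    rw [Matrix.mul_assoc]
  -- PSD facts
  have hPSD_low : (A * D * A - u • (A * A)).PosSemidef := by
    have h1 : Matrix.PosSemidef (Matrix.diagonal fun i => d i - u) :=
      Matrix.PosSemidef.diagonal (fun i => by simpa using sub_nonneg.mpr (hd i).1)
    have h2 := h1.conjTranspose_mul_mul_same A
    have h3 : Aᴴ * Matrix.diagonal (fun i => d i - u) * A = A * D * A - u • (A * A) := by
      rw [hAH, hD]
      have : Matrix.diagonal (fun i => d i - u) =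
          Matrix.diagonal d - u • (1 : Matrix (Fin n) (Fin n) ℝ) := by
        rw [← Matrix.diagonal_one, ← Matrix.diagonal_smul, ← Matrix.diagonal_sub]
        congr with i
        simp [Matrix.smul_apply, Matrix.one_apply, Matrix.diagonal_apply, mul_ite]
      rw [this]
      simp only [Matrix.mul_sub, Matrix.sub_mul, Matrix.mul_smul, Matrix.smul_mul,
        Matrix.mul_one]
    rwa [h3] at h2
  have hPSD_up : (U • (A * A) - A * D * A).PosSemidef := by
    have h1 : Matrix.PosSemidef (Matrix.diagonal fun i => U - d i) :=
      Matrix.PosSemidef.diagonal (fun i => by simpa using sub_nonneg.mpr (hd i).2)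
    have h2 := h1.conjTranspose_mul_mul_same A
    have h3 : Aᴴ * Matrix.diagonal (fun i => U - d i) * A = U • (A * A) - A * D * A := by
      rw [hAH, hD]
      have : Matrix.diagonal (fun i => U - d i) =
          U • (1 : Matrix (Fin n) (Fin n) ℝ) - Matrix.diagonal d := by
        rw [← Matrix.diagonal_one, ← Matrix.diagonal_smul, ← Matrix.diagonal_sub]
        congr with i
        simp [Matrix.smul_apply, Matrix.one_apply, Matrix.diagonal_apply, mul_ite]
      rw [this]
      simp only [Matrix.mul_sub, Matrix.sub_mul, Matrix.mul_smul, Matrix.smul_mul,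
        Matrix.mul_one]
    rwa [h3] at h2
  -- quadratic form comparisons
  have hq_low : ∀ x : EuclideanSpace ℝ (Fin n),
      u * ⟪x, Matrix.toEuclideanLin (A * A) x⟫ ≤ ⟪x, Matrix.toEuclideanLin (A * D * A) x⟫ := by
    intro x
    have := hPSD_low.dotProduct_mulVec_nonneg ((WithLp.equiv 2 _) x)
    rw [Matrix.sub_mulVec, Matrix.smul_mulVec, dotProduct_sub,
      dotProduct_smul] at this
    rw [aux_inner_eq_dot, aux_inner_eq_dot]
    simp only [smul_eq_mul] at this ⊢
    linarith
  have hq_up : ∀ x : EuclideanSpace ℝ (Fin n),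
      ⟪x, Matrix.toEuclideanLin (A * D * A) x⟫ ≤ U * ⟪x, Matrix.toEuclideanLin (A * A) x⟫ := by
    intro x
    have := hPSD_up.dotProduct_mulVec_nonneg ((WithLp.equiv 2 _) x)
    rw [Matrix.sub_mulVec, Matrix.smul_mulVec, dotProduct_sub,
      dotProduct_smul] at this
    rw [aux_inner_eq_dot, aux_inner_eq_dot]
    simp only [smul_eq_mul] at this ⊢
    linarith
  constructor
  · -- u * λ_k(A²) ≤ λ_k(ADA)
    obtain ⟨x, hx0, h1, h2⟩ := aux_exists_vec hAA hADA hk1 hk2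
    have hxx : (0:ℝ) < ⟪x, x⟫ :=
      lt_of_le_of_ne real_inner_self_nonneg (Ne.symm (inner_self_ne_zero.mpr hx0))
    have : u * (kthLargestEig (A * A) k * ⟪x, x⟫) ≤ kthLargestEig (A * D * A) k * ⟪x, x⟫ := by
      calc u * (kthLargestEig (A * A) k * ⟪x, x⟫)
          ≤ u * ⟪x, Matrix.toEuclideanLin (A * A) x⟫ := by
            exact mul_le_mul_of_nonneg_left h1 hu
        _ ≤ ⟪x, Matrix.toEuclideanLin (A * D * A) x⟫ := hq_low x
        _ ≤ kthLargestEig (A * D * A) k * ⟪x, x⟫ := h2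
    rw [← mul_assoc] at this
    exact le_of_mul_le_mul_right this hxx
  · -- λ_k(ADA) ≤ U * λ_k(A²)
    obtain ⟨x, hx0, h1, h2⟩ := aux_exists_vec hADA hAA hk1 hk2
    have hxx : (0:ℝ) < ⟪x, x⟫ :=
      lt_of_le_of_ne real_inner_self_nonneg (Ne.symm (inner_self_ne_zero.mpr hx0))
    have : kthLargestEig (A * D * A) k * ⟪x, x⟫ ≤ U * (kthLargestEig (A * A) k * ⟪x, x⟫) := by
      calc kthLargestEig (A * D * A) k * ⟪x, x⟫
          ≤ ⟪x, Matrix.toEuclideanLin (A * D * A) x⟫ := h1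
        _ ≤ U * ⟪x, Matrix.toEuclideanLin (A * A) x⟫ := hq_up x
        _ ≤ U * (kthLargestEig (A * A) k * ⟪x, x⟫) := by
            exact mul_le_mul_of_nonneg_left h2 (le_trans hu huU)
    rw [← mul_assoc] at this
    exact le_of_mul_le_mul_right this hxx
end

section
/- Let H ∈ ℝ^{n×n} be a real symmetric positive semidefinite matrix, let R ∈ ℝ^{n×n} be a diagonal matrix with nonnegative diagonal entries, and let μ ∈ ℝⁿ. Then μᵀ H R H μ ≤ (trace(R H R H))^{1/2} · (μᵀ H μ). -/
open Matrix


lemma key {n : ℕ} (M : Matrix (Fin n) (Fin n) ℝ) (hM : M.IsSymm) (x : Fin n → ℝ) :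
    x ⬝ᵥ M.mulVec x ≤ Real.sqrt ((M * M).trace) * (x ⬝ᵥ x) := by
  set F2 : ℝ := ∑ i, ∑ j, (M i j) ^ 2 with hF2
  have hF2nn : 0 ≤ F2 := Finset.sum_nonneg fun i _ => Finset.sum_nonneg fun j _ => sq_nonneg _
  have htr : (M * M).trace = F2 := by
    simp only [Matrix.trace, Matrix.diag, Matrix.mul_apply, hF2]
    refine Finset.sum_congr rfl fun i _ => Finset.sum_congr rfl fun j _ => ?_
    rw [← hM.apply j i, sq]
  have hxx : 0 ≤ x ⬝ᵥ x := by
    simp only [dotProduct]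
    exact Finset.sum_nonneg fun i _ => mul_self_nonneg _
  -- (x ⬝ Mx)^2 ≤ F2 * (x⬝x)^2
  have h1 : (x ⬝ᵥ M.mulVec x) ^ 2 ≤ (x ⬝ᵥ x) * ∑ i, (M.mulVec x i) ^ 2 := by
    have := Finset.sum_mul_sq_le_sq_mul_sq Finset.univ x (M.mulVec x)
    simpa [dotProduct, sq] using this
  have h2 : ∑ i, (M.mulVec x i) ^ 2 ≤ F2 * (x ⬝ᵥ x) := by
    rw [hF2, Finset.sum_mul]
    refine Finset.sum_le_sum fun i _ => ?_
    have := Finset.sum_mul_sq_le_sq_mul_sq Finset.univ (fun j => M i j) x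
    simpa [Matrix.mulVec, dotProduct, sq] using this
  have h3 : (x ⬝ᵥ M.mulVec x) ^ 2 ≤ F2 * (x ⬝ᵥ x) ^ 2 := by
    calc (x ⬝ᵥ M.mulVec x) ^ 2 ≤ (x ⬝ᵥ x) * (F2 * (x ⬝ᵥ x)) := by
          refine h1.trans ?_
          exact mul_le_mul_of_nonneg_left h2 hxx
      _ = F2 * (x ⬝ᵥ x) ^ 2 := by ring
  have hrhs : 0 ≤ Real.sqrt F2 * (x ⬝ᵥ x) := mul_nonneg (Real.sqrt_nonneg _) hxx
  rw [htr]
  rcases le_or_gt (x ⬝ᵥ M.mulVec x) 0 with h | h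
  · exact h.trans hrhs
  · calc x ⬝ᵥ M.mulVec x = Real.sqrt ((x ⬝ᵥ M.mulVec x) ^ 2) := (Real.sqrt_sq h.le).symm
      _ ≤ Real.sqrt (F2 * (x ⬝ᵥ x) ^ 2) := Real.sqrt_le_sqrt h3
      _ = Real.sqrt F2 * (x ⬝ᵥ x) := by
          rw [Real.sqrt_mul hF2nn, Real.sqrt_sq hxx]
/-- For `H` real symmetric positive semidefinite, `R` diagonal with
nonnegative diagonal entries, and `μ ∈ ℝⁿ`,
`μᵀ H R H μ ≤ √(trace (R H R H)) · (μᵀ H μ)`. -/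
theorem stmt16 {n : ℕ} (H R : Matrix (Fin n) (Fin n) ℝ)
    (hH : H.PosSemidef) (r : Fin n → ℝ) (hR : R = Matrix.diagonal r)
    (hr : ∀ i, 0 ≤ r i) (μ : Fin n → ℝ) :
    μ ⬝ᵥ (H * R * H).mulVec μ
      ≤ Real.sqrt ((R * H * R * H).trace) * (μ ⬝ᵥ H.mulVec μ) := by
  obtain ⟨S, hSsymm, hSS⟩ : ∃ S : Matrix (Fin n) (Fin n) ℝ, Sᵀ = S ∧ S * S = H := by
    open scoped MatrixOrder in
    refine ⟨CFC.sqrt H, ?_, CFC.sqrt_mul_sqrt_self H hH.nonneg⟩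
    open scoped MatrixOrder in
    have := (CFC.sqrt_nonneg H).posSemidef.isHermitian
    simpa [Matrix.IsHermitian, Matrix.conjTranspose_eq_transpose_of_trivial] using this
  have hRsymm : Rᵀ = R := by rw [hR]; exact (Matrix.diagonal_transpose r)
  have hMsymm : (S * R * S).IsSymm := by
    unfold Matrix.IsSymm
    rw [Matrix.transpose_mul, Matrix.transpose_mul, hSsymm, hRsymm, Matrix.mul_assoc]
  have hdot : ∀ w, (S.mulVec μ) ⬝ᵥ w = μ ⬝ᵥ S.mulVec w := by
    intro w
    rw [Matrix.dotProduct_mulVec μ S w, ← Matrix.mulVec_transpose, hSsymm]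
  have h := key (S * R * S) hMsymm (S.mulVec μ)
  have e1 : (S.mulVec μ) ⬝ᵥ (S * R * S).mulVec (S.mulVec μ) = μ ⬝ᵥ (H * R * H).mulVec μ := by
    rw [hdot, Matrix.mulVec_mulVec, Matrix.mulVec_mulVec]
    congr 1
    rw [← hSS]; noncomm_ring
  have e2 : (S * R * S * (S * R * S)).trace = (R * H * R * H).trace := by
    have : S * R * S * (S * R * S) = S * (R * H * R * S) := by rw [← hSS]; noncomm_ring
    rw [this, Matrix.trace_mul_comm]
    congr 1
    rw [← hSS]; noncomm_ring
  have e3 : (S.mulVec μ) ⬝ᵥ (S.mulVec μ) = μ ⬝ᵥ H.mulVec μ := by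
    rw [hdot, Matrix.mulVec_mulVec, hSS]
  rw [e1, e2, e3] at h
  exact h
end

section
/- Let D ∈ ℝ^{d×d} be a real symmetric positive definite matrix. Then for all indices j, k ∈ {1, …, d}: |det(D) · (D^{−1})_{jk}| ≤ d · (trace(D))^{d−1}. -/
open Matrix Finset

/-- Entry bound for real positive semidefinite matrices. -/
lemma psd_entry_bound {m : ℕ} {M : Matrix (Fin m) (Fin m) ℝ} (hM : M.PosSemidef)
    (i j : Fin m) : |M i j| ≤ (M i i + M j j) / 2 := by
  have hsym : M j i = M i j := by
    have := congrFun (congrFun hM.1 i) j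
    simpa [Matrix.conjTranspose_apply] using this
  have h1 := hM.dotProduct_mulVec_nonneg (Pi.single i (1:ℝ) + Pi.single j 1)
  have h2 := hM.dotProduct_mulVec_nonneg (Pi.single i (1:ℝ) - Pi.single j 1)
  simp only [star_trivial, Matrix.mulVec_add, Matrix.mulVec_sub, add_dotProduct,
    sub_dotProduct, dotProduct_add, dotProduct_sub,
    single_dotProduct, Matrix.mulVec_single, one_mul, mul_one, Pi.smul_apply,
    MulOpposite.smul_eq_mul_unop, MulOpposite.unop_op, Matrix.col_apply] at h1 h2
  rw [hsym] at h1 h2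
  rw [abs_le]
  constructor <;> nlinarith

/-- Determinant of a real PSD matrix is at most trace to the dimension. -/
lemma psd_det_le_trace_pow {m : ℕ} {M : Matrix (Fin m) (Fin m) ℝ} (hM : M.PosSemidef) :
    M.det ≤ M.trace ^ m := by
  have htr : M.trace = ∑ i, hM.1.eigenvalues i := by
    conv_lhs => rw [hM.1.spectral_theorem]
    rw [Unitary.conjStarAlgAut_apply]
    rw [Matrix.trace_mul_cycle]
    rw [show (star (hM.1.eigenvectorUnitary : Matrix (Fin m) (Fin m) ℝ)) *
        (hM.1.eigenvectorUnitary : Matrix (Fin m) (Fin m) ℝ) = 1 from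
      Matrix.mem_unitaryGroup_iff'.mp (hM.1.eigenvectorUnitary).2]
    simp [Matrix.trace_diagonal]
  have hdet : M.det = ∏ i, hM.1.eigenvalues i := by
    simpa using hM.1.det_eq_prod_eigenvalues
  have hle : ∀ i, hM.1.eigenvalues i ≤ M.trace := by
    intro i
    rw [htr]
    exact Finset.single_le_sum (fun a _ => hM.eigenvalues_nonneg a) (Finset.mem_univ i)
  calc M.det = ∏ i, hM.1.eigenvalues i := hdet
    _ ≤ ∏ _i : Fin m, M.trace :=
      Finset.prod_le_prod (fun a _ => hM.eigenvalues_nonneg a) (fun a _ => hle a)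
    _ = M.trace ^ m := by simp [Finset.prod_const]

/-- For a real symmetric positive definite `d × d` matrix `D` and all
indices `j, k`, `|det D · (D⁻¹)ⱼₖ| ≤ d · (trace D)^(d−1)`. -/
theorem stmt17 {d : ℕ} (D : Matrix (Fin d) (Fin d) ℝ) (hD : D.PosDef) :
    ∀ j k : Fin d, |D.det * D⁻¹ j k| ≤ (d : ℝ) * D.trace ^ (d - 1) := by
  intro j k
  cases d with
  | zero => exact j.elim0
  | succ n =>
    have hdet : D.det ≠ 0 := hD.det_pos.ne'
    have heq : D.adjugate = D.det • D⁻¹ := by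
      rw [Matrix.inv_def, smul_smul, Ring.inverse_eq_inv', mul_inv_cancel₀ hdet, one_smul]
    have hkey : D.det * D⁻¹ j k = D.adjugate j k := by
      rw [heq]; simp [Matrix.smul_apply]
    have hdiagpos : ∀ i : Fin (n + 1), 0 < D i i := by
      intro i
      have := hD.dotProduct_mulVec_pos (x := Pi.single i 1) (by
        intro h
        simpa using congrFun h i)
      simpa [dotProduct_single, Matrix.mulVec_single] using this
    have htrpos : 0 < D.trace := by
      rw [Matrix.trace]
      exact Finset.sum_pos (fun a _ => hdiagpos a) Finset.univ_nonempty
    -- adjugate is positive semidefinite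
    have hadj : (D.adjugate).PosSemidef := by
      rw [heq]
      refine Matrix.PosSemidef.of_dotProduct_mulVec_nonneg ?_ ?_
      · show (D.det • D⁻¹)ᴴ = D.det • D⁻¹
        rw [Matrix.conjTranspose_smul, hD.inv.1, star_trivial]
      · intro x
        have h := hD.inv.posSemidef.dotProduct_mulVec_nonneg x
        rw [Matrix.smul_mulVec, dotProduct_smul]
        exact smul_nonneg hD.det_pos.le h
    -- diagonal adjugate entries are bounded by trace^n
    have hdiag : ∀ i : Fin (n + 1), D.adjugate i i ≤ D.trace ^ n := by
      intro i
      rw [Matrix.adjugate_fin_succ_eq_det_submatrix]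
      rw [Even.neg_one_pow ⟨(i : ℕ), rfl⟩, one_mul]
      have hsub : (D.submatrix i.succAbove i.succAbove).PosSemidef :=
        hD.posSemidef.submatrix _
      have h1 : (D.submatrix i.succAbove i.succAbove).trace ≤ D.trace := by
        have hsplit : D.trace = D i i + (D.submatrix i.succAbove i.succAbove).trace := by
          simp [Matrix.trace, Matrix.diag, Fin.sum_univ_succAbove (fun a => D a a) i]
        nlinarith [hdiagpos i]
      have h0 : 0 ≤ (D.submatrix i.succAbove i.succAbove).trace := by
        rw [Matrix.trace]
        exact Finset.sum_nonneg fun a _ => (hdiagpos _).le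
      calc (D.submatrix i.succAbove i.succAbove).det
          ≤ (D.submatrix i.succAbove i.succAbove).trace ^ n := psd_det_le_trace_pow hsub
        _ ≤ D.trace ^ n := pow_le_pow_left₀ h0 h1 n
    have hb := psd_entry_bound hadj j k
    rw [hkey]
    have hn : (1 : ℝ) ≤ ((n : ℝ) + 1) := by
      have : (0 : ℝ) ≤ (n : ℝ) := Nat.cast_nonneg n
      linarith
    have htp : 0 ≤ D.trace ^ n := pow_nonneg htrpos.le n
    calc |D.adjugate j k| ≤ (D.adjugate j j + D.adjugate k k) / 2 := hb
      _ ≤ D.trace ^ n := by nlinarith [hdiag j, hdiag k]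
      _ ≤ ((n : ℕ) + 1 : ℝ) * D.trace ^ n := by nlinarith
      _ = ((n + 1 : ℕ) : ℝ) * D.trace ^ (n + 1 - 1) := by push_cast; ring_nf
end
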